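/- arXiv:2008.08638 — 4 statements merged into one kernel-verified Lean document; each statement's English description precedes it below -/
import Mathlib

section
/- Let X be a connected coarsely transitive graph, let x₀ be a vertex and r > 0, and suppose the ball B₀ = B(x₀,r) satisfies |U(X,B₀)| ≥ 2. Then there exists R > 0 such that for every vertex x, the cardinality of U(X,B(x,R)) is at least the cardinality of U(X,B₀). -/
/-- `f` is an `(L,A)`-quasi-isometric embedding with respect to the
distance functions `dX` and `dY`. -/
def IsQIE {X Y : Type*} (dX : X → X → ℝ) (dY : Y → Y → ℝ) (L A : ℝ) (f : X → Y) : Prop :=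
  ∀ a b : X, (1 / L) * dX a b - A ≤ dY (f a) (f b) ∧ dY (f a) (f b) ≤ L * dX a b + A

/-- `f` is coarsely surjective with respect to the distance function `dY`. -/
def IsCoarselySurj {X Y : Type*} (dY : Y → Y → ℝ) (f : X → Y) : Prop :=
  ∃ C : ℝ, 0 ≤ C ∧ ∀ y : Y, ∃ x : X, dY y (f x) ≤ C

/-- `f` is an `(L,A)`-quasi-isometry. -/
def IsQI {X Y : Type*} (dX : X → X → ℝ) (dY : Y → Y → ℝ) (L A : ℝ) (f : X → Y) : Prop :=
  IsQIE dX dY L A f ∧ IsCoarselySurj dY f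

/-- The shortest-path distance of a graph, as a real-valued distance function. -/
noncomputable def gdist {V : Type*} (G : SimpleGraph V) : V → V → ℝ := fun u v => (G.dist u v : ℝ)

/-- A graph is coarsely transitive if there is `K ≥ 1` such that any vertex can be mapped
to any other vertex by a `(K,K)`-quasi-isometry (w.r.t. the shortest-path distance). -/
def CoarselyTransitive {V : Type*} (G : SimpleGraph V) : Prop :=
  ∃ K : ℝ, 1 ≤ K ∧ ∀ x y : V, ∃ f : V → V, IsQI (gdist G) (gdist G) K K f ∧ f x = y

/-- A set of vertices is bounded if it has finite diameter in the shortest-path metric. -/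
def BddSet {V : Type*} (G : SimpleGraph V) (S : Set V) : Prop :=
  ∃ D : ℕ, ∀ u ∈ S, ∀ v ∈ S, G.dist u v ≤ D

/-- The set of vertices of `X` belonging to the connected component `C` of the subgraph
induced on the complement of `S`. -/
def compVerts {V : Type*} (G : SimpleGraph V) (S : Set V)
    (C : (G.induce (Sᶜ : Set V)).ConnectedComponent) : Set V :=
  {v | ∃ h : v ∈ (Sᶜ : Set V), (G.induce (Sᶜ : Set V)).connectedComponentMk ⟨v, h⟩ = C}

/-- `U(X,S)`: the set of connected components of the subgraph induced on the complement of
`S` whose vertex sets are unbounded in the metric of `X`. -/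
def unbddComps {V : Type*} (G : SimpleGraph V) (S : Set V) :
    Set ((G.induce (Sᶜ : Set V)).ConnectedComponent) :=
  {C | ¬ BddSet G (compVerts G S C)}

/-- The closed ball of radius `r` about `x` in the shortest-path metric. -/
def gball {V : Type*} (G : SimpleGraph V) (x : V) (r : ℕ) : Set V :=
  {v | G.dist x v ≤ r}

open SimpleGraph

namespace Stmt4Aux

variable {V : Type*} {G : SimpleGraph V}

/-- being in the same component of the complement of `S`. -/
def SameComp (G : SimpleGraph V) (S : Set V) (a b : V) : Prop :=
  ∃ (ha : a ∈ (Sᶜ : Set V)) (hb : b ∈ (Sᶜ : Set V)),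
    (G.induce (Sᶜ : Set V)).Reachable ⟨a, ha⟩ ⟨b, hb⟩

theorem SameComp.refl {S : Set V} {a : V} (ha : a ∉ S) : SameComp G S a a :=
  ⟨ha, ha, Reachable.refl _⟩

theorem SameComp.symm {S : Set V} {a b : V} (h : SameComp G S a b) : SameComp G S b a := by
  obtain ⟨ha, hb, hr⟩ := h; exact ⟨hb, ha, hr.symm⟩

theorem SameComp.trans {S : Set V} {a b c : V} (h : SameComp G S a b)
    (h' : SameComp G S b c) : SameComp G S a c := by
  obtain ⟨ha, hb, hr⟩ := h; obtain ⟨hb', hc, hr'⟩ := h'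
  exact ⟨ha, hc, hr.trans hr'⟩

theorem SameComp.notmem_left {S : Set V} {a b : V} (h : SameComp G S a b) : a ∉ S :=
  h.1

theorem sameComp_adj {S : Set V} {a b : V} (ha : a ∉ S) (hb : b ∉ S) (hab : G.Adj a b) :
    SameComp G S a b :=
  ⟨ha, hb, Adj.reachable (by simpa using hab)⟩

theorem sameComp_of_walk {S : Set V} {a b : V} (w : G.Walk a b)
    (hw : ∀ v ∈ w.support, v ∉ S) : SameComp G S a b := by
  induction w with
  | nil => exact SameComp.refl (hw _ (by simp))
  | @cons u v b hadj w ih =>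
    refine (sameComp_adj (hw _ (by simp)) (hw _ (by simp)) hadj).trans (ih ?_)
    intro z hz; exact hw _ (by simp [hz])

theorem SameComp.mem_compVerts {S : Set V} {a b : V} (hab : SameComp G S a b)
    {C : (G.induce (Sᶜ : Set V)).ConnectedComponent}
    (ha : a ∈ compVerts G S C) : b ∈ compVerts G S C := by
  obtain ⟨ha', hb', hr⟩ := hab
  obtain ⟨ha'', hmk⟩ := ha
  exact ⟨hb', by rw [← hmk]; exact ConnectedComponent.sound hr.symm⟩

theorem sameComp_of_mem {S : Set V} {a b : V} {C : (G.induce (Sᶜ : Set V)).ConnectedComponent}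
    (ha : a ∈ compVerts G S C) (hb : b ∈ compVerts G S C) : SameComp G S a b := by
  obtain ⟨ha', hmka⟩ := ha; obtain ⟨hb', hmkb⟩ := hb
  exact ⟨ha', hb', ConnectedComponent.exact (by rw [hmka, hmkb])⟩

theorem compVerts_unique {S : Set V} {v : V}
    {C C' : (G.induce (Sᶜ : Set V)).ConnectedComponent}
    (h : v ∈ compVerts G S C) (h' : v ∈ compVerts G S C') : C = C' := by
  obtain ⟨h1, e1⟩ := h; obtain ⟨h2, e2⟩ := h'
  rw [← e1, ← e2]

theorem mem_compVerts_mk {S : Set V} {a : V} (ha : a ∈ (Sᶜ : Set V)) :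
    a ∈ compVerts G S ((G.induce (Sᶜ : Set V)).connectedComponentMk ⟨a, ha⟩) :=
  ⟨ha, rfl⟩

theorem ball_sameComp (hconn : G.Connected) {y : V} {ρ : ℕ} {S : Set V}
    (hd : ∀ u, G.dist y u ≤ ρ → u ∉ S) {v : V} (hv : G.dist y v ≤ ρ) :
    SameComp G S y v := by
  classical
  obtain ⟨w, hw⟩ := hconn.exists_walk_length_eq_dist y v
  refine sameComp_of_walk w ?_
  intro u hu
  apply hd
  calc G.dist y u ≤ (w.takeUntil u hu).length := dist_le _
    _ ≤ w.length := Walk.length_takeUntil_le w hu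
    _ ≤ ρ := by rw [hw]; exact hv

theorem close_reach (hconn : G.Connected) {y : V} {ρ : ℕ} {a b : V}
    (h : ρ + G.dist a b < G.dist y a) : SameComp G (gball G y ρ) a b := by
  classical
  obtain ⟨w, hw⟩ := hconn.exists_walk_length_eq_dist a b
  refine sameComp_of_walk w ?_
  intro v hv
  have h1 : G.dist a v ≤ G.dist a b := by
    calc G.dist a v ≤ (w.takeUntil v hv).length := dist_le _
      _ ≤ w.length := Walk.length_takeUntil_le w hv
      _ = G.dist a b := hw
  have h2 : G.dist y a ≤ G.dist y v + G.dist v a := hconn.dist_triangle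
  have h3 : G.dist v a = G.dist a v := SimpleGraph.dist_comm
  intro hmem
  have h4 : G.dist y v ≤ ρ := hmem
  omega

theorem push {S T : Set V} {φ : V → V} (hmem : ∀ c, c ∉ T → φ c ∉ S)
    (hstep : ∀ c d, c ∉ T → d ∉ T → G.Adj c d → SameComp G S (φ c) (φ d))
    {z z' : V} (hzz : SameComp G T z z') : SameComp G S (φ z) (φ z') := by
  obtain ⟨hz, hz', ⟨w⟩⟩ := hzz
  have H : ∀ (p q : (Tᶜ : Set V)) (w : (G.induce (Tᶜ : Set V)).Walk p q),
      SameComp G S (φ p) (φ q) := by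
    intro p q w
    induction w with
    | nil => exact SameComp.refl (hmem _ (by exact ‹(Tᶜ : Set V)›.2))
    | @cons u u' q hadj w ih =>
      have hGadj : G.Adj ↑u ↑u' := by simpa using hadj
      exact (hstep _ _ u.2 u'.2 hGadj).trans ih
  exact H _ _ w

theorem escape (hconn : G.Connected) {x a : V} {R : ℕ}
    (hdisj : ∀ v, G.dist a v ≤ R → ¬ G.dist x v ≤ R) :
    ∀ {z : V} (w : G.Walk z x), ¬ G.dist a z ≤ R → ¬ SameComp G (gball G x R) z a →
      SameComp G (gball G a R) z x := by
  intro z w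
  induction w with
  | nil => intro hzA _; exact SameComp.refl hzA
  | @cons z z₁ x hadj w ih =>
    intro hzA hzna
    by_cases hzT : G.dist x z ≤ R
    · exact (ball_sameComp hconn (fun u hu => fun hmem => hdisj u hmem hu) hzT).symm
    · by_cases hz₁A : G.dist a z₁ ≤ R
      · exfalso
        have h1 : SameComp G (gball G x R) a z₁ :=
          ball_sameComp hconn (fun u hu => fun hmem => hdisj u hu hmem) hz₁A
        have h2 : SameComp G (gball G x R) z z₁ :=
          sameComp_adj (S := gball G x R) hzT (hdisj z₁ hz₁A) hadj
        exact hzna (h2.trans h1.symm)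
      · by_cases hz₁T : SameComp G (gball G x R) z₁ a
        · exfalso
          have hz₁notT : ¬ G.dist x z₁ ≤ R := hz₁T.notmem_left
          exact hzna ((sameComp_adj (S := gball G x R) hzT hz₁notT hadj).trans hz₁T)
        · exact (sameComp_adj (S := gball G a R) hzA hz₁A hadj).trans (ih hdisj hz₁A hz₁T)

theorem mem_gball {y v : V} {ρ : ℕ} : v ∈ gball G y ρ ↔ G.dist y v ≤ ρ := Iff.rfl

theorem qie_dist_le {K : ℝ} (hK : 1 ≤ K) {φ : V → V}
    (hq : IsQIE (gdist G) (gdist G) K K φ) (a b : V) :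
    (G.dist a b : ℝ) ≤ K * ((G.dist (φ a) (φ b) : ℝ) + K) := by
  have h1 := (hq a b).1
  simp only [gdist] at h1
  have hK0 : (0:ℝ) < K := lt_of_lt_of_le one_pos hK
  have h2 : K * ((1/K) * (G.dist a b : ℝ) - K) ≤ K * (G.dist (φ a) (φ b) : ℝ) :=
    mul_le_mul_of_nonneg_left h1 hK0.le
  have h3 : K * (1/K) = 1 := mul_one_div_cancel hK0.ne'
  nlinarith [h2, h3]

theorem far_image {K : ℝ} (hK : 1 ≤ K) {R r : ℕ} (hR : K * ((r:ℝ) + 3*K + 2) ≤ (R:ℝ))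
    {φ : V → V} (hq : IsQIE (gdist G) (gdist G) K K φ) {y z : V}
    (hyz : ¬ G.dist y z ≤ R) :
    (r:ℝ) + 2*K + 1 < (G.dist (φ y) (φ z) : ℝ) := by
  have hK0 : (0:ℝ) < K := lt_of_lt_of_le one_pos hK
  have h1 := qie_dist_le hK hq y z
  have h2 : (R:ℝ) + 1 ≤ (G.dist y z : ℝ) := by
    have : R + 1 ≤ G.dist y z := Nat.succ_le_of_lt (Nat.lt_of_not_le hyz)
    exact_mod_cast this
  nlinarith [h1, h2, hR, hK, hK0]

theorem deep (hconn : G.Connected) {S : Set V}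
    {C : (G.induce (Sᶜ : Set V)).ConnectedComponent}
    (hC : ¬ BddSet G (compVerts G S C)) (N : ℕ) (y : V) :
    ∃ p ∈ compVerts G S C, N < G.dist y p := by
  by_contra hcon
  push_neg at hcon
  refine hC ⟨2*N, fun u hu v hv => ?_⟩
  have h1 := hcon u hu
  have h2 := hcon v hv
  have h3 : G.dist u v ≤ G.dist u y + G.dist y v := hconn.dist_triangle
  have h4 : G.dist u y = G.dist y u := SimpleGraph.dist_comm
  omega

theorem unbdd_image {K : ℝ} (hK : 1 ≤ K) {φ : V → V}
    (hq : IsQIE (gdist G) (gdist G) K K φ) {S T : Set V}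
    (hpush : ∀ z z', SameComp G T z z' → SameComp G S (φ z) (φ z'))
    {D : (G.induce (Tᶜ : Set V)).ConnectedComponent}
    {C : (G.induce (Sᶜ : Set V)).ConnectedComponent}
    (hD : ¬ BddSet G (compVerts G T D)) {z₀ : V}
    (hz₀ : z₀ ∈ compVerts G T D) (hz₀' : φ z₀ ∈ compVerts G S C) :
    ¬ BddSet G (compVerts G S C) := by
  have hK0 : (0:ℝ) < K := lt_of_lt_of_le one_pos hK
  rintro ⟨M, hM⟩
  refine hD ⟨⌈K * ((M:ℝ) + K)⌉₊, fun u hu v hv => ?_⟩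
  have h1 : φ u ∈ compVerts G S C :=
    (hpush _ _ (sameComp_of_mem hz₀ hu)).mem_compVerts hz₀'
  have h2 : φ v ∈ compVerts G S C :=
    (hpush _ _ (sameComp_of_mem hz₀ hv)).mem_compVerts hz₀'
  have h3 := hM _ h1 _ h2
  have h4 := qie_dist_le hK hq u v
  have h5 : (G.dist u v : ℝ) ≤ K * ((M:ℝ) + K) := by
    have h6 : (G.dist (φ u) (φ v) : ℝ) ≤ (M:ℝ) := by exact_mod_cast h3
    nlinarith [h4, h6, hK0]
  have h7 : (G.dist u v : ℝ) ≤ (⌈K * ((M:ℝ) + K)⌉₊ : ℝ) :=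
    le_trans h5 (Nat.le_ceil _)
  exact_mod_cast h7

end Stmt4Aux

set_option maxHeartbeats 1000000 in
open Stmt4Aux in
/-- in a connected coarsely transitive graph, if some ball `B₀ = B(x₀,r)`
has at least two unbounded complementary components, then there is `R > 0` such that
every ball of radius `R` has at least `|U(X,B₀)|` unbounded complementary components. -/
theorem stmt4 {V : Type*} (G : SimpleGraph V) (hconn : G.Connected)
    (hct : CoarselyTransitive G) (x₀ : V) (r : ℕ) (hr : 0 < r)
    (h2 : 2 ≤ Cardinal.mk ↥(unbddComps G (gball G x₀ r))) :
    ∃ R : ℕ, 0 < R ∧ ∀ x : V,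
      Cardinal.mk ↥(unbddComps G (gball G x₀ r)) ≤
        Cardinal.mk ↥(unbddComps G (gball G x R)) := by
  classical
  have hnn : ∀ n : ℕ, (0:ℝ) ≤ (n:ℝ) := fun n => Nat.cast_nonneg n
  obtain ⟨K, hK, hctf⟩ := hct
  have hK0 : (0:ℝ) < K := lt_of_lt_of_le one_pos hK
  obtain ⟨R, hR, hRpos⟩ : ∃ R : ℕ, K * ((r:ℝ) + 3*K + 2) ≤ (R:ℝ) ∧ 0 < R := by
    refine ⟨⌈K * ((r:ℝ) + 3*K + 2)⌉₊ + 1, ?_, Nat.succ_pos _⟩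
    calc K * ((r:ℝ) + 3*K + 2) ≤ (⌈K * ((r:ℝ) + 3*K + 2)⌉₊ : ℝ) := Nat.le_ceil _
      _ ≤ _ := by push_cast; linarith
  refine ⟨R, hRpos, ?_⟩
  intro x
  set S₀ : Set V := gball G x₀ r with hS₀def
  set T : Set V := gball G x R with hTdef
  -- the key uniform estimates, for any (K,K)-QIE sending some basepoint y to x₀
  have key : ∀ (y : V) (φ : V → V), IsQIE (gdist G) (gdist G) K K φ → φ y = x₀ →
      (∀ c, c ∉ gball G y R → φ c ∉ S₀) ∧
      (∀ z z', SameComp G (gball G y R) z z' → SameComp G S₀ (φ z) (φ z')) := by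
    intro y φ hφ hy
    have hfar : ∀ c, c ∉ gball G y R → ((r:ℝ) + 2*K + 1 < (G.dist x₀ (φ c) : ℝ)) := by
      intro c hc
      have h1 : ¬ G.dist y c ≤ R := hc
      have h2 := far_image (G := G) hK hR hφ h1
      rwa [hy] at h2
    have hmem : ∀ c, c ∉ gball G y R → φ c ∉ S₀ := by
      intro c hc hmem'
      have h1 := hfar c hc
      have h2 : G.dist x₀ (φ c) ≤ r := hmem'
      have h3 : (G.dist x₀ (φ c) : ℝ) ≤ (r:ℝ) := by exact_mod_cast h2
      nlinarith [hK0]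
    refine ⟨hmem, fun z z' hzz => ?_⟩
    refine push hmem ?_ hzz
    intro c d hc hd hadj
    have h1 := hfar c hc
    have h2 : (G.dist (φ c) (φ d) : ℝ) ≤ 2*K := by
      have h3 := (hφ c d).2
      simp only [gdist] at h3
      have hd1 : G.dist c d = 1 := by
        rw [SimpleGraph.dist_eq_one_iff_adj]; exact hadj
      rw [hd1] at h3
      push_cast at h3
      nlinarith [h3, hK]
    have hgoal : ((r + G.dist (φ c) (φ d) : ℕ) : ℝ) < (G.dist x₀ (φ c) : ℝ) := by
      push_cast; linarith
    exact close_reach hconn (by exact_mod_cast hgoal)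
  obtain ⟨h, ⟨hq, hcs⟩, hx⟩ := hctf x x₀
  obtain ⟨Ch, hCh0, hChs⟩ := hcs
  obtain ⟨hmem_h, hpush_h⟩ := key x h hq hx
  -- totality of the induced map on unbounded components
  have htot : ∀ D : ↥(unbddComps G T), ∃ C : ↥(unbddComps G S₀),
      ∃ z, z ∈ compVerts G T D.1 ∧ h z ∈ compVerts G S₀ C.1 := by
    rintro ⟨D, hD⟩
    obtain ⟨⟨z₀, hz₀c⟩, hmk⟩ := D.exists_rep
    have hz₀D : z₀ ∈ compVerts G T D := ⟨hz₀c, hmk⟩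
    have hhz₀ : h z₀ ∈ (S₀ᶜ : Set V) := hmem_h z₀ hz₀c
    have hhz₀C : h z₀ ∈
        compVerts G S₀ ((G.induce (S₀ᶜ : Set V)).connectedComponentMk ⟨h z₀, hhz₀⟩) :=
      mem_compVerts_mk hhz₀
    have hunb : ((G.induce (S₀ᶜ : Set V)).connectedComponentMk ⟨h z₀, hhz₀⟩) ∈
        unbddComps G S₀ :=
      unbdd_image hK hq hpush_h hD hz₀D hhz₀C
    exact ⟨⟨_, hunb⟩, z₀, hz₀D, hhz₀C⟩
  choose sfun zf hz1 hz2 using htot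
  have hfunc : ∀ (D : ↥(unbddComps G T)) (C : ↥(unbddComps G S₀)),
      (∃ z', z' ∈ compVerts G T D.1 ∧ h z' ∈ compVerts G S₀ C.1) → sfun D = C := by
    rintro D C ⟨z', hz'1, hz'2⟩
    have hsc : SameComp G T (zf D) z' := sameComp_of_mem (hz1 D) hz'1
    have h1 := (hpush_h _ _ hsc).mem_compVerts (hz2 D)
    exact Subtype.ext (compVerts_unique h1 hz'2)
  refine Cardinal.mk_le_of_surjective (f := sfun) ?_
  intro C
  -- a second unbounded component distinct from C
  obtain ⟨C₁, C₂, hC12⟩ := Cardinal.two_le_iff.mp h2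
  obtain ⟨C', hC'ne⟩ : ∃ C' : ↥(unbddComps G S₀), C'.1 ≠ C.1 := by
    rcases eq_or_ne C₁ C with h1 | h1
    · exact ⟨C₂, fun hval => hC12 (h1.trans (Subtype.ext hval).symm)⟩
    · exact ⟨C₁, fun hval => h1 (Subtype.ext hval)⟩
  -- pick a deep point p of C and a coarse preimage a of p under h
  obtain ⟨ρ, hρ⟩ : ∃ ρ : ℕ, K * (2*(R:ℝ) + 2*K + 2) + Ch + (r:ℝ) + 1 ≤ (ρ:ℝ) :=
    ⟨⌈K * (2*(R:ℝ) + 2*K + 2) + Ch + (r:ℝ) + 1⌉₊, Nat.le_ceil _⟩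
  obtain ⟨p, hpC, hpd⟩ := deep hconn C.2 ρ x₀
  obtain ⟨a, hpa⟩ := hChs p
  simp only [gdist] at hpa
  have hpd' : (ρ:ℝ) < (G.dist x₀ p : ℝ) := by exact_mod_cast hpd
  have htri1 : G.dist x₀ p ≤ G.dist x₀ (h a) + G.dist p (h a) := by
    have h1 := hconn.dist_triangle (u := x₀) (v := h a) (w := p)
    have hcomm : G.dist (h a) p = G.dist p (h a) := SimpleGraph.dist_comm
    omega
  have hx0ha : (ρ:ℝ) - Ch < (G.dist x₀ (h a) : ℝ) := by
    have h1 : (G.dist x₀ p : ℝ) ≤ (G.dist x₀ (h a) : ℝ) + (G.dist p (h a) : ℝ) := by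
      exact_mod_cast htri1
    linarith
  have hupper : (G.dist x₀ (h a) : ℝ) ≤ K * (G.dist x a : ℝ) + K := by
    have h1 := (hq x a).2
    simp only [gdist] at h1
    rwa [hx] at h1
  have hdxa : 2*(R:ℝ) + 1 < (G.dist x a : ℝ) := by
    by_contra hcon
    push_neg at hcon
    have hmul := mul_le_mul_of_nonneg_left hcon hK0.le
    nlinarith [hmul, hρ, hx0ha, hupper, hK, hnn r, hnn R]
  have hdxaN : 2*R+1 < G.dist x a := by
    have : ((2*R+1 : ℕ) : ℝ) < (G.dist x a : ℝ) := by push_cast; linarith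
    exact_mod_cast this
  have haT : a ∉ T := by
    intro hmem'
    have : G.dist x a ≤ R := hmem'
    omega
  have hdisj : ∀ v, G.dist a v ≤ R → ¬ G.dist x v ≤ R := by
    intro v h1 h2
    have h3 : G.dist x a ≤ G.dist x v + G.dist v a := hconn.dist_triangle
    have h4 : G.dist v a = G.dist a v := SimpleGraph.dist_comm
    omega
  have hcrp : SameComp G S₀ p (h a) := by
    refine close_reach hconn ?_
    have h1 : ((r + G.dist p (h a) : ℕ) : ℝ) < (G.dist x₀ p : ℝ) := by
      push_cast
      nlinarith [hρ, hpd', hpa, hK0, hK, hnn R]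
    exact_mod_cast h1
  have hhaC : h a ∈ compVerts G S₀ C.1 := hcrp.mem_compVerts hpC
  have haTc : a ∈ (Tᶜ : Set V) := haT
  set D : (G.induce (Tᶜ : Set V)).ConnectedComponent :=
    (G.induce (Tᶜ : Set V)).connectedComponentMk ⟨a, haTc⟩ with hDdef
  have haD : a ∈ compVerts G T D := mem_compVerts_mk haTc
  -- D is unbounded
  have hDu : ¬ BddSet G (compVerts G T D) := by
    rintro ⟨M, hM⟩
    obtain ⟨e, ⟨heq, hes⟩, hea⟩ := hctf a x₀
    obtain ⟨Ce, hCe0, hCes⟩ := hes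
    obtain ⟨hmem_e, hpush_e⟩ := key a e heq hea
    obtain ⟨ρ', hρ'⟩ : ∃ ρ' : ℕ,
        K * (2*(G.dist x a : ℝ) + M + R + 2) + Ce + K + (r:ℝ) + 1 ≤ (ρ':ℝ) :=
      ⟨⌈K * (2*(G.dist x a : ℝ) + M + R + 2) + Ce + K + (r:ℝ) + 1⌉₊, Nat.le_ceil _⟩
    obtain ⟨p', hp'C, hp'd⟩ := deep hconn C.2 ρ' x₀
    obtain ⟨q', hq'C, hq'd⟩ := deep hconn C'.2 ρ' x₀
    obtain ⟨u, hu⟩ := hCes p'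
    obtain ⟨v, hv⟩ := hCes q'
    simp only [gdist] at hu hv
    have main : ∀ t w : V, ρ' < G.dist x₀ t → (G.dist t (e w) : ℝ) ≤ Ce →
        (¬ G.dist a w ≤ R) ∧ (G.dist x a + M < G.dist x w) ∧ SameComp G S₀ t (e w) := by
      intro t w ht hw
      have ht' : (ρ':ℝ) < (G.dist x₀ t : ℝ) := by exact_mod_cast ht
      have htri : G.dist x₀ t ≤ G.dist x₀ (e w) + G.dist t (e w) := by
        have h1 := hconn.dist_triangle (u := x₀) (v := e w) (w := t)
        have hcomm : G.dist (e w) t = G.dist t (e w) := SimpleGraph.dist_comm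
        omega
      have h1 : (ρ':ℝ) - Ce < (G.dist x₀ (e w) : ℝ) := by
        have h2 : (G.dist x₀ t : ℝ) ≤ (G.dist x₀ (e w) : ℝ) + (G.dist t (e w) : ℝ) := by
          exact_mod_cast htri
        linarith
      have h3 : (G.dist x₀ (e w) : ℝ) ≤ K * (G.dist a w : ℝ) + K := by
        have h4 := (heq a w).2
        simp only [gdist] at h4
        rwa [hea] at h4
      have h5 : 2*(G.dist x a : ℝ) + (M:ℝ) + (R:ℝ) + 1 < (G.dist a w : ℝ) := by
        by_contra hcon
        push_neg at hcon
        have hmul := mul_le_mul_of_nonneg_left hcon hK0.le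
        nlinarith [hmul, hρ', h1, h3, hK, hnn R, hnn M, hnn (G.dist x a)]
      have h6 : ¬ G.dist a w ≤ R := by
        intro h7
        have h8 : (G.dist a w : ℝ) ≤ (R:ℝ) := by exact_mod_cast h7
        nlinarith [h5, hnn M, hnn (G.dist x a)]
      have h9 : G.dist x a + M < G.dist x w := by
        have htri2 : G.dist a w ≤ G.dist a x + G.dist x w := hconn.dist_triangle
        have hcomm2 : G.dist a x = G.dist x a := SimpleGraph.dist_comm
        have h10 : ((G.dist a w : ℕ) : ℝ) ≤ ((G.dist a x + G.dist x w : ℕ) : ℝ) := by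
          exact_mod_cast htri2
        push_cast at h10
        rw [hcomm2] at h10
        have h11 : ((G.dist x a + M : ℕ):ℝ) < ((G.dist x w : ℕ):ℝ) := by
          push_cast
          nlinarith [h5, h10, hnn R]
        exact_mod_cast h11
      have h12 : SameComp G S₀ t (e w) := by
        refine close_reach hconn ?_
        have h13 : ((r + G.dist t (e w) : ℕ) : ℝ) < (G.dist x₀ t : ℝ) := by
          push_cast
          nlinarith [hρ', ht', hw, hK0, hK, hnn R, hnn M, hnn (G.dist x a)]
        exact_mod_cast h13
      exact ⟨h6, h9, h12⟩
    obtain ⟨hRau, hxu, hscu⟩ := main p' u hp'd hu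
    obtain ⟨hRav, hxv, hscv⟩ := main q' v hq'd hv
    have heuC : e u ∈ compVerts G S₀ C.1 := hscu.mem_compVerts hp'C
    have hevC' : e v ∈ compVerts G S₀ C'.1 := hscv.mem_compVerts hq'C
    have hnotsu : ¬ SameComp G T u a := by
      intro hs
      have h1 : u ∈ compVerts G T D := hs.symm.mem_compVerts haD
      have h2 := hM u h1 a haD
      have h3 : G.dist x u ≤ G.dist x a + G.dist a u := hconn.dist_triangle
      have h4 : G.dist a u = G.dist u a := SimpleGraph.dist_comm
      omega
    have hnotsv : ¬ SameComp G T v a := by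
      intro hs
      have h1 : v ∈ compVerts G T D := hs.symm.mem_compVerts haD
      have h2 := hM v h1 a haD
      have h3 : G.dist x v ≤ G.dist x a + G.dist a v := hconn.dist_triangle
      have h4 : G.dist a v = G.dist v a := SimpleGraph.dist_comm
      omega
    obtain ⟨wu⟩ := hconn.preconnected u x
    obtain ⟨wv⟩ := hconn.preconnected v x
    have hscAu : SameComp G (gball G a R) u x := escape hconn hdisj wu hRau hnotsu
    have hscAv : SameComp G (gball G a R) v x := escape hconn hdisj wv hRav hnotsv
    have husv : SameComp G (gball G a R) u v := hscAu.trans hscAv.symm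
    have hsc : SameComp G S₀ (e u) (e v) := hpush_e _ _ husv
    have hevC : e v ∈ compVerts G S₀ C.1 := hsc.mem_compVerts heuC
    exact hC'ne (compVerts_unique hevC' hevC)
  exact ⟨⟨D, hDu⟩, hfunc ⟨D, hDu⟩ C ⟨a, haD, hhaC⟩⟩
end

section
/- Let X be a connected coarsely transitive graph with exactly two ends, i.e., the supremum over bounded vertex sets B of the number of unbounded connected components of the complement of B equals 2. Then there exists R > 0 such that for every vertex x, the set U(X,B(x,R)) has exactly 2 elements. -/
namespace Stmt5Aux

open SimpleGraph

variable {V : Type*} {G : SimpleGraph V}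

/-- Reachability avoiding a set `S`. -/
def Avoid (G : SimpleGraph V) (S : Set V) (a b : V) : Prop :=
  ∃ p : G.Walk a b, ∀ w ∈ p.support, w ∉ S

lemma Avoid.refl {S : Set V} {a : V} (ha : a ∉ S) : Avoid G S a a :=
  ⟨Walk.nil, by simpa using ha⟩

lemma Avoid.symm' {S : Set V} {a b : V} (h : Avoid G S a b) : Avoid G S b a := by
  obtain ⟨p, hp⟩ := h
  exact ⟨p.reverse, fun w hw => hp w (by simpa [Walk.support_reverse] using hw)⟩

lemma Avoid.trans' {S : Set V} {a b c : V} (h : Avoid G S a b) (h' : Avoid G S b c) :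
    Avoid G S a c := by
  obtain ⟨p, hp⟩ := h
  obtain ⟨q, hq⟩ := h'
  refine ⟨p.append q, fun w hw => ?_⟩
  rcases (Walk.mem_support_append_iff p q).1 hw with h | h
  exacts [hp w h, hq w h]

lemma Avoid.cons' {S : Set V} {a b c : V} (hadj : G.Adj a b) (ha : a ∉ S)
    (h : Avoid G S b c) : Avoid G S a c := by
  obtain ⟨p, hp⟩ := h
  refine ⟨Walk.cons hadj p, fun w hw => ?_⟩
  rcases (by simpa [Walk.support_cons] using hw : w = a ∨ w ∈ p.support) with rfl | hw
  exacts [ha, hp w hw]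

lemma Avoid.mono {S T : Set V} (hTS : T ⊆ S) {a b : V} (h : Avoid G S a b) :
    Avoid G T a b := by
  obtain ⟨p, hp⟩ := h
  exact ⟨p, fun w hw hwT => hp w hw (hTS hwT)⟩

/-- There is a walk from `a` to `b` all of whose vertices are within `dist a b` of `a`. -/
lemma exists_walk_close (hconn : G.Connected) (a b : V) :
    ∃ p : G.Walk a b, ∀ w ∈ p.support, G.dist a w ≤ G.dist a b := by
  haveI := Classical.decEq V
  obtain ⟨p, hp⟩ := hconn.exists_walk_length_eq_dist a b
  refine ⟨p, fun w hw => ?_⟩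
  calc G.dist a w ≤ (p.takeUntil w hw).length := dist_le _
    _ ≤ p.length := Walk.length_takeUntil_le p hw
    _ = G.dist a b := hp

lemma avoid_of_close (hconn : G.Connected) {S : Set V} {a b : V}
    (h : ∀ w : V, G.dist a w ≤ G.dist a b → w ∉ S) : Avoid G S a b := by
  obtain ⟨p, hp⟩ := exists_walk_close hconn a b
  exact ⟨p, fun w hw => h w (hp w hw)⟩

lemma mk_eq_of_avoid {S : Set V} {a b : V} :
    ∀ (p : G.Walk a b) (hp : ∀ w ∈ p.support, w ∉ S),
    (G.induce (Sᶜ : Set V)).connectedComponentMk ⟨a, hp a p.start_mem_support⟩ =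
      (G.induce (Sᶜ : Set V)).connectedComponentMk ⟨b, hp b p.end_mem_support⟩ := by
  intro p
  induction p with
  | nil => intro hp; rfl
  | @cons a c b hadj q ih =>
    intro hp
    have ha : a ∈ (Sᶜ : Set V) := hp a (by simp)
    have hc : c ∈ (Sᶜ : Set V) := hp c (by simp)
    have hq : ∀ w ∈ q.support, w ∉ S := fun w hw => hp w (by simp [Walk.support_cons, hw])
    have hstep : (G.induce (Sᶜ : Set V)).Adj ⟨a, ha⟩ ⟨c, hc⟩ := by
      simpa using hadj
    exact (ConnectedComponent.connectedComponentMk_eq_of_adj hstep).trans (ih hq)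

lemma avoid_of_reachable {S : Set V} :
    ∀ (x y : (Sᶜ : Set V)) (_ : (G.induce (Sᶜ : Set V)).Reachable x y),
      Avoid G S x.1 y.1 := by
  intro x y hr
  obtain ⟨p⟩ := hr
  induction p with
  | nil => rename_i u; exact Avoid.refl u.2
  | @cons a c b hadj q ih =>
    exact Avoid.cons' (by simpa using hadj) a.2 ih

lemma avoid_of_mk_eq {S : Set V} {a b : V} (ha : a ∉ S) (hb : b ∉ S)
    (h : (G.induce (Sᶜ : Set V)).connectedComponentMk ⟨a, ha⟩ =
      (G.induce (Sᶜ : Set V)).connectedComponentMk ⟨b, hb⟩) : Avoid G S a b :=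
  avoid_of_reachable ⟨a, ha⟩ ⟨b, hb⟩ (ConnectedComponent.eq.mp h)

lemma compVerts_mk_eq {S : Set V} {u : V} (hu : u ∈ (Sᶜ : Set V)) :
    compVerts G S ((G.induce (Sᶜ : Set V)).connectedComponentMk ⟨u, hu⟩) =
      {v | v ∉ S ∧ Avoid G S u v} := by
  ext v
  constructor
  · rintro ⟨hv, hmk⟩
    exact ⟨hv, (avoid_of_mk_eq hv hu hmk).symm'⟩
  · rintro ⟨hv, hav⟩
    obtain ⟨p, hp⟩ := hav.symm'
    exact ⟨hv, mk_eq_of_avoid p hp⟩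

lemma exists_deep (hconn : G.Connected) {A : Set V} (hA : ¬ BddSet G A) (o : V) (n : ℕ) :
    ∃ a ∈ A, n ≤ G.dist o a := by
  by_contra hcon
  push_neg at hcon
  refine hA ⟨2 * n, fun p hp q hq => ?_⟩
  have h1 : G.dist p o < n := by rw [SimpleGraph.dist_comm]; exact hcon p hp
  have h2 : G.dist o q < n := hcon q hq
  have h3 := hconn.dist_triangle (u := p) (v := o) (w := q)
  omega

lemma gball_bdd (hconn : G.Connected) (x : V) (R : ℕ) : BddSet G (gball G x R) := by
  refine ⟨2 * R, fun p hp q hq => ?_⟩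
  have h1 : G.dist p x ≤ R := by rw [SimpleGraph.dist_comm]; exact hp
  have h2 : G.dist x q ≤ R := hq
  have h3 := hconn.dist_triangle (u := p) (v := x) (w := q)
  omega

lemma qie_lower {K : ℝ} {K₀ : ℕ} (hK : 1 ≤ K) (hKK : K ≤ (K₀ : ℝ))
    {h : V → V} (hq : IsQIE (gdist G) (gdist G) K K h) (a b : V) :
    (G.dist a b : ℝ) / K₀ - K₀ ≤ (G.dist (h a) (h b) : ℝ) := by
  have h0 : (0:ℝ) < K := lt_of_lt_of_le one_pos hK
  have h0' : (0:ℝ) < K₀ := lt_of_lt_of_le h0 hKK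
  have hlow := (hq a b).1
  have hd : (0:ℝ) ≤ (G.dist a b : ℝ) := Nat.cast_nonneg _
  have hdiv : (G.dist a b : ℝ) / (K₀ : ℝ) ≤ (G.dist a b : ℝ) / K :=
    div_le_div_of_nonneg_left hd h0 hKK
  have h1 : (1/K) * (G.dist a b : ℝ) = (G.dist a b : ℝ)/K := by ring
  unfold gdist at hlow
  linarith [hlow]

lemma qie_upper {K : ℝ} {K₀ : ℕ} (hK : 1 ≤ K) (hKK : K ≤ (K₀ : ℝ))
    {h : V → V} (hq : IsQIE (gdist G) (gdist G) K K h) (a b : V) :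
    (G.dist (h a) (h b) : ℝ) ≤ (K₀ : ℝ) * (G.dist a b : ℝ) + K₀ := by
  have h0 : (0:ℝ) < K := lt_of_lt_of_le one_pos hK
  have hup := (hq a b).2
  have hd : (0:ℝ) ≤ (G.dist a b : ℝ) := Nat.cast_nonneg _
  unfold gdist at hup
  nlinarith [hup]

lemma dist_triangle_real (hconn : G.Connected) (a b c : V) :
    (G.dist a c : ℝ) ≤ (G.dist a b : ℝ) + (G.dist b c : ℝ) := by
  exact_mod_cast hconn.dist_triangle (u := a) (v := b) (w := c)

lemma push (hconn : G.Connected) {K : ℝ} {K₀ : ℕ} (hK : 1 ≤ K) (hKK : K ≤ (K₀ : ℝ))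
    {h : V → V} (hq : IsQIE (gdist G) (gdist G) K K h) (u : V) (θ : ℝ) :
    ∀ {a b : V} (p : G.Walk a b),
      (∀ w ∈ p.support, θ ≤ (G.dist u w : ℝ)) →
      ∃ q : G.Walk (h a) (h b), ∀ w ∈ q.support,
        θ / (K₀ : ℝ) - 3 * (K₀ : ℝ) ≤ (G.dist (h u) w : ℝ) := by
  have h0 : (0:ℝ) < K := lt_of_lt_of_le one_pos hK
  have h0' : (0:ℝ) < K₀ := lt_of_lt_of_le h0 hKK
  intro a b p
  induction p with
  | nil =>
    rename_i a
    intro hp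
    refine ⟨Walk.nil, fun w hw => ?_⟩
    have hwa : w = h a := by simpa using hw
    subst hwa
    have hlow := qie_lower hK hKK hq u a
    have hθ : θ ≤ (G.dist u a : ℝ) := hp a (by simp)
    have hθdiv : θ / (K₀ : ℝ) ≤ (G.dist u a : ℝ) / K₀ := by gcongr
    linarith
  | @cons a c b hadj q ih =>
    intro hp
    obtain ⟨q', hq'⟩ := ih (fun w hw => hp w (by simp [Walk.support_cons, hw]))
    obtain ⟨r, hr⟩ := exists_walk_close hconn (h a) (h c)
    have hac : G.dist a c ≤ 1 := by
      have := SimpleGraph.dist_le hadj.toWalk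
      simpa using this
    have hupper : (G.dist (h a) (h c) : ℝ) ≤ 2 * (K₀ : ℝ) := by
      have := qie_upper hK hKK hq a c
      have hc1 : (G.dist a c : ℝ) ≤ 1 := by exact_mod_cast hac
      nlinarith
    have hlowa : θ / (K₀ : ℝ) - (K₀ : ℝ) ≤ (G.dist (h u) (h a) : ℝ) := by
      have hlow := qie_lower hK hKK hq u a
      have hθ : θ ≤ (G.dist u a : ℝ) := hp a (by simp)
      have hθdiv : θ / (K₀ : ℝ) ≤ (G.dist u a : ℝ) / K₀ := by gcongr
      linarith
    refine ⟨r.append q', fun w hw => ?_⟩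
    rcases (Walk.mem_support_append_iff r q').1 hw with hw | hw
    · have hclose : (G.dist (h a) w : ℝ) ≤ 2 * (K₀ : ℝ) := by
        have := hr w hw
        have : (G.dist (h a) w : ℝ) ≤ (G.dist (h a) (h c) : ℝ) := by exact_mod_cast this
        linarith
      have htri := dist_triangle_real hconn (h u) w (h a)
      have hcomm : (G.dist w (h a) : ℝ) = (G.dist (h a) w : ℝ) := by
        rw [SimpleGraph.dist_comm]
      linarith
    · exact hq' w hw

lemma reroute (hconn : G.Connected) (x u : V) (R : ℕ) :
    ∀ {w y : V} (_ : G.Walk w y),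
      y ∈ gball G x R →
      w ∉ {v | v ∉ gball G x R ∧ Avoid G (gball G x R) u v} →
      Avoid G {v | v ∉ gball G x R ∧ Avoid G (gball G x R) u v} w y := by
  intro w y p
  induction p with
  | nil => intro _ hx; exact Avoid.refl hx
  | @cons w c y hadj q ih =>
    intro hy hw
    by_cases hc : c ∈ {v | v ∉ gball G x R ∧ Avoid G (gball G x R) u v}
    · by_cases hwS : w ∈ gball G x R
      · have h1 : Avoid G {v | v ∉ gball G x R ∧ Avoid G (gball G x R) u v} x w := by
          refine avoid_of_close hconn (a := x) (b := w) ?_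
          intro z hz hzD
          exact hzD.1 (le_trans hz hwS)
        have h2 : Avoid G {v | v ∉ gball G x R ∧ Avoid G (gball G x R) u v} x y := by
          refine avoid_of_close hconn (a := x) (b := y) ?_
          intro z hz hzD
          exact hzD.1 (le_trans hz hy)
        exact h1.symm'.trans' h2
      · exact absurd ⟨hwS, hc.2.trans' (Avoid.cons' hadj.symm hc.1 (Avoid.refl hwS))⟩ hw
    · exact Avoid.cons' hadj hw (ih hy hc)

lemma reroute' (hconn : G.Connected) (x u : V) (R : ℕ) {w : V}
    (hw : w ∉ {v | v ∉ gball G x R ∧ Avoid G (gball G x R) u v}) :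
    Avoid G {v | v ∉ gball G x R ∧ Avoid G (gball G x R) u v} w x :=
  (hconn w x).elim fun p => reroute hconn x u R p (by simp [gball, SimpleGraph.dist_self]) hw

lemma kappa_div {K₀ m : ℕ} (h1 : 1 ≤ K₀) :
    ((K₀ * (m + 3 * K₀ + 2) : ℕ) : ℝ) / (K₀ : ℝ) = (m : ℝ) + 3 * K₀ + 2 := by
  have hne : (K₀ : ℝ) ≠ 0 := by positivity
  push_cast
  rw [mul_comm, mul_div_assoc, div_self hne, mul_one]

lemma main_unbounded
    (hconn : G.Connected) {K : ℝ} (hK : 1 ≤ K)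
    (hct2 : ∀ a b : V, ∃ f : V → V, IsQI (gdist G) (gdist G) K K f ∧ f a = b)
    {K₀ : ℕ} (hKK : K ≤ (K₀ : ℝ))
    {B₀ : Set V} {o : V} (ho : o ∈ B₀) {m : ℕ} (hm : ∀ b ∈ B₀, G.dist o b ≤ m)
    {C₁ C₂ : (G.induce (B₀ᶜ : Set V)).ConnectedComponent}
    (hC₁ : C₁ ∈ unbddComps G B₀) (hC₂ : C₂ ∈ unbddComps G B₀) (hC : C₁ ≠ C₂)
    (x u : V) (R : ℕ)
    (hdeep : R + K₀ * (m + 3 * K₀ + 2) < G.dist x u) :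
    ¬ BddSet G {v | v ∉ gball G x R ∧ Avoid G (gball G x R) u v} := by
  have h0 : (0:ℝ) < K := lt_of_lt_of_le one_pos hK
  have h0' : (0:ℝ) < (K₀ : ℝ) := lt_of_lt_of_le h0 hKK
  have hK₀1 : 1 ≤ K₀ := by exact_mod_cast le_trans hK hKK
  set κ : ℕ := K₀ * (m + 3 * K₀ + 2) with hκdef
  rintro ⟨δ, hδ⟩
  have hu : u ∉ gball G x R := by
    intro hmem
    have : G.dist x u ≤ R := hmem
    omega
  have huD : u ∈ {v | v ∉ gball G x R ∧ Avoid G (gball G x R) u v} :=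
    ⟨hu, Avoid.refl hu⟩
  obtain ⟨h, ⟨hqie, hsurj⟩, hhu⟩ := hct2 u o
  obtain ⟨C, hC0, hCs⟩ := hsurj
  obtain ⟨n, hn⟩ := exists_nat_ge ((K₀ : ℝ) * ((δ : ℝ) + κ + 1) + C + K₀ + m + 1)
  obtain ⟨s₁, hs₁mem, hs₁deep⟩ := exists_deep hconn hC₁ o n
  obtain ⟨s₂, hs₂mem, hs₂deep⟩ := exists_deep hconn hC₂ o n
  obtain ⟨hs₁c, hmk₁⟩ := hs₁mem
  obtain ⟨hs₂c, hmk₂⟩ := hs₂mem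
  obtain ⟨ub, hub⟩ := hCs s₁
  obtain ⟨vb, hvb⟩ := hCs s₂
  have hub' : (G.dist s₁ (h ub) : ℝ) ≤ C := hub
  have hvb' : (G.dist s₂ (h vb) : ℝ) ≤ C := hvb
  -- basic positivity
  have hκ0 : (0:ℝ) ≤ (κ : ℝ) := Nat.cast_nonneg _
  have hδ0 : (0:ℝ) ≤ (δ : ℝ) := Nat.cast_nonneg _
  have hm0 : (0:ℝ) ≤ (m : ℝ) := Nat.cast_nonneg _
  -- distance from u to the coarse preimages is large
  have key2 : ∀ z w : V, (G.dist z (h w) : ℝ) ≤ C → n ≤ G.dist o z →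
      (δ : ℝ) + κ + 1 ≤ (G.dist u w : ℝ) := by
    intro z w hzw hzn
    have tri := dist_triangle_real hconn o (h w) z
    have hcomm : (G.dist (h w) z : ℝ) = (G.dist z (h w) : ℝ) := by
      rw [SimpleGraph.dist_comm]
    have hzn' : (n : ℝ) ≤ (G.dist o z : ℝ) := by exact_mod_cast hzn
    have h1 : (n : ℝ) - C ≤ (G.dist o (h w) : ℝ) := by linarith
    have hup := qie_upper hK hKK hqie u w
    rw [hhu] at hup
    have h2 : (K₀ : ℝ) * ((δ : ℝ) + κ + 1) ≤ (K₀ : ℝ) * (G.dist u w : ℝ) := by linarith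
    exact le_of_mul_le_mul_left h2 h0'
  have hubdeep : (δ : ℝ) + κ + 1 ≤ (G.dist u ub : ℝ) := key2 s₁ ub hub' hs₁deep
  have hvbdeep : (δ : ℝ) + κ + 1 ≤ (G.dist u vb : ℝ) := key2 s₂ vb hvb' hs₂deep
  have hubδ : δ < G.dist u ub := by
    have : (δ : ℝ) < (G.dist u ub : ℝ) := by linarith
    exact_mod_cast this
  have hvbδ : δ < G.dist u vb := by
    have : (δ : ℝ) < (G.dist u vb : ℝ) := by linarith
    exact_mod_cast this
  have hubD : ub ∉ {v | v ∉ gball G x R ∧ Avoid G (gball G x R) u v} := by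
    intro hmem
    exact absurd (hδ u huD ub hmem) (by omega)
  have hvbD : vb ∉ {v | v ∉ gball G x R ∧ Avoid G (gball G x R) u v} := by
    intro hmem
    exact absurd (hδ u huD vb hmem) (by omega)
  have hA : Avoid G {v | v ∉ gball G x R ∧ Avoid G (gball G x R) u v} ub vb :=
    (reroute' hconn x u R hubD).trans' (reroute' hconn x u R hvbD).symm'
  obtain ⟨p, hp⟩ := hA
  -- every vertex of p is at distance > κ from u
  have hpθ : ∀ w ∈ p.support, ((κ : ℝ) + 1) ≤ (G.dist u w : ℝ) := by
    intro w hw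
    by_contra hcon
    push_neg at hcon
    have hwκ : G.dist u w ≤ κ := by
      have : (G.dist u w : ℝ) < (κ : ℝ) + 1 := hcon
      exact_mod_cast Nat.lt_succ_iff.mp (by exact_mod_cast this)
    refine hp w hw ⟨?_, ?_⟩
    · intro hwball
      have h1 : G.dist x w ≤ R := hwball
      have h2 := hconn.dist_triangle (u := x) (v := w) (w := u)
      have h3 : G.dist w u = G.dist u w := SimpleGraph.dist_comm
      omega
    · refine avoid_of_close hconn (a := u) (b := w) ?_
      intro z hz hzball
      have h1 : G.dist x z ≤ R := hzball
      have h2 := hconn.dist_triangle (u := x) (v := z) (w := u)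
      have h3 : G.dist z u = G.dist u z := SimpleGraph.dist_comm
      have h4 : G.dist u z ≤ κ := le_trans hz hwκ
      omega
  obtain ⟨q, hq⟩ := push hconn hK hKK hqie u ((κ : ℝ) + 1) p hpθ
  -- vertices of q avoid B₀
  have hκdiv : ((κ : ℕ) : ℝ) / (K₀ : ℝ) = (m : ℝ) + 3 * K₀ + 2 := kappa_div hK₀1
  have keyB : ∀ w : V, ((κ : ℝ) + 1) / (K₀ : ℝ) - 3 * (K₀ : ℝ) ≤ (G.dist (h u) w : ℝ) →
      w ∉ B₀ := by
    intro w hw hwB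
    have h1 : (G.dist o w : ℝ) ≤ m := by
      have := hm w hwB
      exact_mod_cast this
    rw [hhu] at hw
    have h2 : (κ : ℝ) / (K₀ : ℝ) ≤ ((κ : ℝ) + 1) / (K₀ : ℝ) := by
      gcongr
      linarith
    have hK₀1' : (1:ℝ) ≤ (K₀ : ℝ) := by exact_mod_cast hK₀1
    rw [hκdiv] at h2
    linarith
  have A2 : Avoid G B₀ (h ub) (h vb) := ⟨q, fun w hw => keyB w (hq w hw)⟩
  -- endpoint connections
  have hnC : (m : ℝ) + C < (n : ℝ) := by
    have hKκ : (0:ℝ) ≤ (K₀ : ℝ) * ((δ : ℝ) + κ + 1) := by positivity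
    linarith
  have endp : ∀ z w : V, (G.dist z (h w) : ℝ) ≤ C → n ≤ G.dist o z →
      Avoid G B₀ z (h w) := by
    intro z w hzw hzn
    refine avoid_of_close hconn (a := z) (b := h w) ?_
    intro y hy hyB
    have h1 : (G.dist o y : ℝ) ≤ m := by exact_mod_cast hm y hyB
    have h2 : (G.dist z y : ℝ) ≤ C := by
      have : (G.dist z y : ℝ) ≤ (G.dist z (h w) : ℝ) := by exact_mod_cast hy
      linarith
    have tri := dist_triangle_real hconn o z y
    have hcomm : (G.dist z y : ℝ) = (G.dist y z : ℝ) := by rw [SimpleGraph.dist_comm]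
    have hzn' : (n : ℝ) ≤ (G.dist o z : ℝ) := by exact_mod_cast hzn
    have tri2 := dist_triangle_real hconn o y z
    linarith
  have A1 : Avoid G B₀ s₁ (h ub) := endp s₁ ub hub' hs₁deep
  have A3 : Avoid G B₀ s₂ (h vb) := endp s₂ vb hvb' hs₂deep
  have Atot : Avoid G B₀ s₁ s₂ := (A1.trans' A2).trans' A3.symm'
  obtain ⟨pw, hpw⟩ := Atot
  have hmkeq := mk_eq_of_avoid pw hpw
  exact hC (hmk₁.symm.trans (hmkeq.trans hmk₂))

end Stmt5Aux

open Stmt5Aux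

/-- a connected coarsely transitive graph with exactly two ends (the
supremum over bounded vertex sets `B` of the number of unbounded components of the
complement of `B` equals `2`, i.e. the value `2` is attained and never exceeded)
admits `R > 0` such that every ball of radius `R` has exactly `2` unbounded
complementary components. -/
theorem stmt5 {V : Type*} (G : SimpleGraph V) (hconn : G.Connected)
    (hct : CoarselyTransitive G)
    (hub : ∀ B : Set V, BddSet G B → Cardinal.mk ↥(unbddComps G B) ≤ 2)
    (hex : ∃ B : Set V, BddSet G B ∧ Cardinal.mk ↥(unbddComps G B) = 2) :
    ∃ R : ℕ, 0 < R ∧ ∀ x : V, Cardinal.mk ↥(unbddComps G (gball G x R)) = 2 := by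

  classical
  obtain ⟨K, hK, hct2⟩ := hct
  obtain ⟨K₀, hKK⟩ := exists_nat_ge K
  have h0 : (0:ℝ) < K := lt_of_lt_of_le one_pos hK
  have h0' : (0:ℝ) < (K₀ : ℝ) := lt_of_lt_of_le h0 hKK
  have hK₀1 : 1 ≤ K₀ := by exact_mod_cast le_trans hK hKK
  obtain ⟨B₀, hB₀bdd, hB₀card⟩ := hex
  have h2le : (2 : Cardinal) ≤ Cardinal.mk ↥(unbddComps G B₀) := le_of_eq hB₀card.symm
  obtain ⟨a₁, a₂, hane⟩ := Cardinal.two_le_iff.mp h2le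
  obtain ⟨C₁, hC₁⟩ := a₁
  obtain ⟨C₂, hC₂⟩ := a₂
  have hCne : C₁ ≠ C₂ := fun hEq => hane (Subtype.ext hEq)
  rcases Set.eq_empty_or_nonempty B₀ with hemp | ⟨o, ho⟩
  · exfalso
    obtain ⟨a, hCa⟩ := C₁.exists_rep
    obtain ⟨b, hCb⟩ := C₂.exists_rep
    apply hCne
    rw [← hCa, ← hCb]
    obtain ⟨p⟩ := hconn a.1 b.1
    have hp : ∀ w ∈ p.support, w ∉ B₀ := fun w _ hwB => by
      rw [hemp] at hwB; exact hwB
    have hmkeq := mk_eq_of_avoid (S := B₀) p hp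
    exact hmkeq
  obtain ⟨D₀, hD₀⟩ := hB₀bdd
  have hm : ∀ b ∈ B₀, G.dist o b ≤ D₀ := fun b hb => hD₀ o ho b hb
  set R : ℕ := K₀ * (D₀ + 3 * K₀ + 2) with hRdef
  have hRpos : 0 < R := Nat.mul_pos (by omega) (by omega)
  refine ⟨R, hRpos, ?_⟩
  intro x
  obtain ⟨ψ, ⟨hψqie, ⟨Cψ, hCψ0, hψs⟩⟩, hψx⟩ := hct2 x o
  obtain ⟨n, hn⟩ := exists_nat_ge
    ((K₀ : ℝ) * (2 * (R : ℝ) + 1) + Cψ + K₀ + D₀ + Cψ + 1)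
  obtain ⟨s₁, hs₁mem, hs₁deep⟩ := exists_deep hconn hC₁ o n
  obtain ⟨s₂, hs₂mem, hs₂deep⟩ := exists_deep hconn hC₂ o n
  obtain ⟨hs₁c, hmk₁⟩ := hs₁mem
  obtain ⟨hs₂c, hmk₂⟩ := hs₂mem
  obtain ⟨u, hu⟩ := hψs s₁
  obtain ⟨v, hv⟩ := hψs s₂
  have hu' : (G.dist s₁ (ψ u) : ℝ) ≤ Cψ := hu
  have hv' : (G.dist s₂ (ψ v) : ℝ) ≤ Cψ := hv
  have hR0 : (0:ℝ) ≤ (R : ℝ) := Nat.cast_nonneg _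
  have hD₀0 : (0:ℝ) ≤ (D₀ : ℝ) := Nat.cast_nonneg _
  -- the coarse preimages are deep
  have key2 : ∀ z w : V, (G.dist z (ψ w) : ℝ) ≤ Cψ → n ≤ G.dist o z →
      2 * (R : ℝ) + 1 ≤ (G.dist x w : ℝ) := by
    intro z w hzw hzn
    have tri := dist_triangle_real hconn o (ψ w) z
    have hcomm : (G.dist (ψ w) z : ℝ) = (G.dist z (ψ w) : ℝ) := by
      rw [SimpleGraph.dist_comm]
    have hzn' : (n : ℝ) ≤ (G.dist o z : ℝ) := by exact_mod_cast hzn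
    have h1 : (n : ℝ) - Cψ ≤ (G.dist o (ψ w) : ℝ) := by linarith
    have hup := qie_upper hK hKK hψqie x w
    rw [hψx] at hup
    have h2 : (K₀ : ℝ) * (2 * (R : ℝ) + 1) ≤ (K₀ : ℝ) * (G.dist x w : ℝ) := by linarith
    exact le_of_mul_le_mul_left h2 h0'
  have hudeep : 2 * (R : ℝ) + 1 ≤ (G.dist x u : ℝ) := key2 s₁ u hu' hs₁deep
  have hvdeep : 2 * (R : ℝ) + 1 ≤ (G.dist x v : ℝ) := key2 s₂ v hv' hs₂deep
  have hudeepN : R + R < G.dist x u := by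
    have : 2 * (R : ℝ) + 1 ≤ (G.dist x u : ℝ) := hudeep
    have h2 : (2 * R + 1 : ℕ) ≤ G.dist x u := by exact_mod_cast (by push_cast; linarith : ((2 * R + 1 : ℕ) : ℝ) ≤ (G.dist x u : ℝ))
    omega
  have hvdeepN : R + R < G.dist x v := by
    have h2 : (2 * R + 1 : ℕ) ≤ G.dist x v := by exact_mod_cast (by push_cast; linarith : ((2 * R + 1 : ℕ) : ℝ) ≤ (G.dist x v : ℝ))
    omega
  have hUnbU : ¬ BddSet G {w | w ∉ gball G x R ∧ Avoid G (gball G x R) u w} :=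
    main_unbounded hconn hK hct2 hKK ho hm hC₁ hC₂ hCne x u R (by rw [← hRdef]; exact hudeepN)
  have hUnbV : ¬ BddSet G {w | w ∉ gball G x R ∧ Avoid G (gball G x R) v w} :=
    main_unbounded hconn hK hct2 hKK ho hm hC₁ hC₂ hCne x v R (by rw [← hRdef]; exact hvdeepN)
  have huc : u ∈ ((gball G x R)ᶜ : Set V) := by
    intro hmem
    have : G.dist x u ≤ R := hmem
    omega
  have hvc : v ∈ ((gball G x R)ᶜ : Set V) := by
    intro hmem
    have : G.dist x v ≤ R := hmem
    omega
  set Cu := (G.induce ((gball G x R)ᶜ : Set V)).connectedComponentMk ⟨u, huc⟩ with hCu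
  set Cv := (G.induce ((gball G x R)ᶜ : Set V)).connectedComponentMk ⟨v, hvc⟩ with hCv
  have hCuU : Cu ∈ unbddComps G (gball G x R) := by
    show ¬ BddSet G (compVerts G (gball G x R) Cu)
    rw [hCu, compVerts_mk_eq huc]
    exact hUnbU
  have hCvU : Cv ∈ unbddComps G (gball G x R) := by
    show ¬ BddSet G (compVerts G (gball G x R) Cv)
    rw [hCv, compVerts_mk_eq hvc]
    exact hUnbV
  -- distinctness
  have hCuv : Cu ≠ Cv := by
    intro hEq
    have hAv : Avoid G (gball G x R) u v := avoid_of_mk_eq huc hvc hEq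
    obtain ⟨p, hp⟩ := hAv
    have hpθ : ∀ w ∈ p.support, ((R : ℝ) + 1) ≤ (G.dist x w : ℝ) := by
      intro w hw
      have h1 : ¬ G.dist x w ≤ R := hp w hw
      have h2 : R + 1 ≤ G.dist x w := by omega
      exact_mod_cast h2
    obtain ⟨q, hq⟩ := push hconn hK hKK hψqie x ((R : ℝ) + 1) p hpθ
    have hκdiv : ((R : ℕ) : ℝ) / (K₀ : ℝ) = (D₀ : ℝ) + 3 * K₀ + 2 := kappa_div hK₀1
    have keyB : ∀ w : V, ((R : ℝ) + 1) / (K₀ : ℝ) - 3 * (K₀ : ℝ) ≤ (G.dist (ψ x) w : ℝ) →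
        w ∉ B₀ := by
      intro w hw hwB
      have h1 : (G.dist o w : ℝ) ≤ D₀ := by exact_mod_cast hm w hwB
      rw [hψx] at hw
      have h2 : (R : ℝ) / (K₀ : ℝ) ≤ ((R : ℝ) + 1) / (K₀ : ℝ) := by
        gcongr
        linarith
      rw [hκdiv] at h2
      have hK₀1' : (1:ℝ) ≤ (K₀ : ℝ) := by exact_mod_cast hK₀1
      linarith
    have A2 : Avoid G B₀ (ψ u) (ψ v) := ⟨q, fun w hw => keyB w (hq w hw)⟩
    have hnC : (D₀ : ℝ) + Cψ < (n : ℝ) := by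
      have hpos : (0:ℝ) ≤ (K₀ : ℝ) * (2 * (R : ℝ) + 1) := by positivity
      linarith
    have endp : ∀ z w : V, (G.dist z (ψ w) : ℝ) ≤ Cψ → n ≤ G.dist o z →
        Avoid G B₀ z (ψ w) := by
      intro z w hzw hzn
      refine avoid_of_close hconn (a := z) (b := ψ w) ?_
      intro y hy hyB
      have h1 : (G.dist o y : ℝ) ≤ D₀ := by exact_mod_cast hm y hyB
      have h2 : (G.dist z y : ℝ) ≤ Cψ := by
        have : (G.dist z y : ℝ) ≤ (G.dist z (ψ w) : ℝ) := by exact_mod_cast hy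
        linarith
      have hzn' : (n : ℝ) ≤ (G.dist o z : ℝ) := by exact_mod_cast hzn
      have tri2 := dist_triangle_real hconn o y z
      have hcomm : (G.dist z y : ℝ) = (G.dist y z : ℝ) := by rw [SimpleGraph.dist_comm]
      have tri := dist_triangle_real hconn o z y
      linarith
    have A1 : Avoid G B₀ s₁ (ψ u) := endp s₁ u hu' hs₁deep
    have A3 : Avoid G B₀ s₂ (ψ v) := endp s₂ v hv' hs₂deep
    have Atot : Avoid G B₀ s₁ s₂ := (A1.trans' A2).trans' A3.symm'
    obtain ⟨pw, hpw⟩ := Atot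
    have hmkeq := mk_eq_of_avoid pw hpw
    exact hCne (hmk₁.symm.trans (hmkeq.trans hmk₂))
  have h2le' : (2 : Cardinal) ≤ Cardinal.mk ↥(unbddComps G (gball G x R)) :=
    Cardinal.two_le_iff.mpr ⟨⟨Cu, hCuU⟩, ⟨Cv, hCvU⟩, fun hEq => hCuv (Subtype.ext_iff.mp hEq)⟩
  exact le_antisymm (hub _ (gball_bdd hconn x R)) h2le'
end

section
/- Let X be a connected coarsely transitive graph with exactly two ends, i.e., the supremum over bounded vertex sets B of the number of unbounded connected components of the complement of B equals 2. Then X is quasi-isometric to ℤ: there exist L ≥ 1, A ≥ 0 and an (L,A)-quasi-isometry f : ℤ → X, where ℤ carries the metric d(a,b) = |a − b|. -/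
namespace Stmt6


open SimpleGraph

variable {V : Type*}

/-- Connected by a walk avoiding the set `S`. -/
def AC (G : SimpleGraph V) (S : Set V) (u v : V) : Prop :=
  ∃ W : G.Walk u v, ∀ w ∈ W.support, w ∉ S

variable {G : SimpleGraph V} {S T : Set V} {u v w x y z : V}

lemma AC.refl (h : u ∉ S) : AC G S u u :=
  ⟨Walk.nil, by simp [h]⟩

lemma AC.symm (h : AC G S u v) : AC G S v u := by
  obtain ⟨W, hW⟩ := h
  exact ⟨W.reverse, by simpa using hW⟩

lemma AC.trans (h1 : AC G S u v) (h2 : AC G S v w) : AC G S u w := by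
  obtain ⟨W1, hW1⟩ := h1
  obtain ⟨W2, hW2⟩ := h2
  refine ⟨W1.append W2, fun a ha => ?_⟩
  rw [Walk.mem_support_append_iff] at ha
  rcases ha with ha | ha
  · exact hW1 a ha
  · exact hW2 a ha

lemma AC.mono (hST : S ⊆ T) (h : AC G T u v) : AC G S u v := by
  obtain ⟨W, hW⟩ := h
  exact ⟨W, fun a ha hmem => hW a ha (hST hmem)⟩

lemma AC.not_mem_left (h : AC G S u v) : u ∉ S := by
  obtain ⟨W, hW⟩ := h
  exact hW u W.start_mem_support

lemma AC.not_mem_right (h : AC G S u v) : v ∉ S := by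
  obtain ⟨W, hW⟩ := h
  exact hW v W.end_mem_support

/-- Lift a walk avoiding `S` to reachability in the induced graph on `Sᶜ`. -/
lemma reachable_induce_of_AC' (W : G.Walk u v) (hW : ∀ w ∈ W.support, w ∉ S) :
    ∀ (hu : u ∈ (Sᶜ : Set V)) (hv : v ∈ (Sᶜ : Set V)),
    (G.induce (Sᶜ : Set V)).Reachable ⟨u, hu⟩ ⟨v, hv⟩ := by
  induction W with
  | nil => intro hu hv; exact Reachable.refl _
  | @cons a b c hab W ih =>
    intro hu hv
    have hb : b ∈ (Sᶜ : Set V) := hW b (by simp)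
    have h1 : (G.induce (Sᶜ : Set V)).Adj ⟨a, hu⟩ ⟨b, hb⟩ := by
      simp [hab]
    exact h1.reachable.trans (ih (fun w hw => hW w (by simp [hw])) hb hv)

lemma reachable_induce_of_AC (h : AC G S u v) (hu : u ∈ (Sᶜ : Set V)) (hv : v ∈ (Sᶜ : Set V)) :
    (G.induce (Sᶜ : Set V)).Reachable ⟨u, hu⟩ ⟨v, hv⟩ := by
  obtain ⟨W, hW⟩ := h
  exact reachable_induce_of_AC' W hW hu hv

/-- Walks in the induced graph push down to avoiding walks. -/
lemma AC_of_reachable_induce {hu : u ∈ (Sᶜ : Set V)} {hv : v ∈ (Sᶜ : Set V)}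
    (h : (G.induce (Sᶜ : Set V)).Reachable ⟨u, hu⟩ ⟨v, hv⟩) : AC G S u v := by
  obtain ⟨W⟩ := h
  let emb : G.induce (Sᶜ : Set V) ↪g G := SimpleGraph.Embedding.induce (Sᶜ : Set V)
  refine ⟨(W.map emb.toHom).copy rfl rfl, fun a ha => ?_⟩
  change a ∈ (W.map emb.toHom).support at ha
  rw [Walk.support_map] at ha
  obtain ⟨b, hb, rfl⟩ := List.mem_map.mp ha
  exact b.2

lemma AC_iff_comp (hu : u ∈ (Sᶜ : Set V)) (hv : v ∈ (Sᶜ : Set V)) :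
    AC G S u v ↔ (G.induce (Sᶜ : Set V)).connectedComponentMk ⟨u, hu⟩
      = (G.induce (Sᶜ : Set V)).connectedComponentMk ⟨v, hv⟩ := by
  constructor
  · intro h
    exact ConnectedComponent.sound (reachable_induce_of_AC h hu hv)
  · intro h
    exact AC_of_reachable_induce (ConnectedComponent.exact h)

lemma mem_compVerts_iff {C} :
    v ∈ compVerts G S C ↔ ∃ h : v ∈ (Sᶜ : Set V),
      (G.induce (Sᶜ : Set V)).connectedComponentMk ⟨v, h⟩ = C := Iff.rfl

end Stmt6

section LayerB

open SimpleGraph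
variable {V : Type*} {G : SimpleGraph V} {S : Set V} {u v w x y z : V}

namespace Stmt6

lemma dist_le_of_mem_support (W : G.Walk u v) (hw : w ∈ W.support) :
    G.dist u w ≤ W.length := by
  classical
  exact le_trans (SimpleGraph.dist_le (W.takeUntil w hw)) (W.length_takeUntil_le hw)

/-- Splitting the distance at a vertex of a geodesic. -/
lemma geo_split (hconn : G.Connected) (W : G.Walk u v) (hgeo : W.length = G.dist u v)
    (hw : w ∈ W.support) : G.dist u v = G.dist u w + G.dist w v := by
  classical
  have h1 : G.dist u w ≤ (W.takeUntil w hw).length := SimpleGraph.dist_le _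
  have h2 : G.dist w v ≤ (W.dropUntil w hw).length := SimpleGraph.dist_le _
  have h3 : (W.takeUntil w hw).length + (W.dropUntil w hw).length = W.length := by
    rw [← Walk.length_append, W.take_spec hw]
  have h4 : G.dist u v ≤ G.dist u w + G.dist w v := hconn.dist_triangle
  omega

lemma adj_dist_succ (hconn : G.Connected) (h : G.Adj v w) :
    G.dist x w ≤ G.dist x v + 1 := by
  have : G.dist v w = 1 := SimpleGraph.dist_eq_one_iff_adj.mpr h
  have := hconn.dist_triangle (u := x) (v := v) (w := w)
  omega

/-- Intermediate value theorem for distance to a basepoint along a walk. -/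
lemma walk_ivt (hconn : G.Connected) (W : G.Walk u v) (n : ℕ)
    (h1 : G.dist x u ≤ n) (h2 : n ≤ G.dist x v) : ∃ w ∈ W.support, G.dist x w = n := by
  induction W with
  | nil => exact ⟨_, by simp, le_antisymm h1 h2⟩
  | @cons a b c hab W ih =>
    by_cases hc : G.dist x b ≤ n
    · obtain ⟨w, hw1, hw2⟩ := ih hc h2
      exact ⟨w, by simp [hw1], hw2⟩
    · have hstep := adj_dist_succ hconn hab (x := x)
      exact ⟨a, by simp, by omega⟩

/-- Walking down a geodesic towards the basepoint: from a vertex at distance `m + k`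
one finds a vertex at distance `m` together with a walk of length `k` staying at
distance at least `m`. -/
lemma descend (hconn : G.Connected) (x : V) :
    ∀ (k m : ℕ) (q : V), G.dist x q = m + k →
      ∃ (w : V) (Wk : G.Walk w q), G.dist x w = m ∧
        (∀ z ∈ Wk.support, m ≤ G.dist x z) ∧ Wk.length = k := by
  intro k
  induction k with
  | zero =>
    intro m q hq
    exact ⟨q, Walk.nil, by omega, by simp; omega, rfl⟩
  | succ k ih =>
    intro m q hq
    have hne : G.dist x q ≠ 0 := by omega
    obtain ⟨W, hW⟩ := SimpleGraph.exists_walk_of_dist_ne_zero hne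
    -- peel the last edge of W
    have hlen : W.reverse.length = m + (k + 1) := by
      rw [Walk.length_reverse, hW, hq]
    rcases Wrev_eq : W.reverse with _ | ⟨hab, W'⟩
    · rw [Wrev_eq] at hlen; simp at hlen
    · rename_i b
      -- W.reverse : q ⇝ x  starts with edge q—b, then W' : b ⇝ x
      have hW' : W'.length = m + k := by
        have := hlen; rw [Wrev_eq] at this; simp at this; omega
      have hdb : G.dist x b = m + k := by
        have hle : G.dist x b ≤ m + k := by
          have h5 := SimpleGraph.dist_le W'.reverse
          rw [Walk.length_reverse, hW'] at h5
          exact h5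
        have hge : m + k + 1 ≤ G.dist x b + 1 := by
          have := adj_dist_succ hconn hab.symm (x := x)
          omega
        omega
      obtain ⟨w, Wk, hw1, hw2, hw3⟩ := ih m b hdb
      refine ⟨w, Wk.concat hab.symm, hw1, ?_, by simp [hw3]⟩
      intro z hz
      simp only [Walk.support_concat, List.concat_eq_append, List.mem_append,
        List.mem_singleton] at hz
      rcases hz with hz | hz
      · exact hw2 z hz
      · subst hz; omega

/-- For a walk from `a ∉ Sset` to `b ∈ Sset` there is a prefix avoiding `Sset`
ending adjacent to `Sset`. -/
lemma before_hit {u v : V} (W : G.Walk u v) :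
    u ∉ S → v ∈ S →
    ∃ (a c : V) (W1 : G.Walk u a), G.Adj a c ∧ c ∈ S ∧ ∀ w ∈ W1.support, w ∉ S := by
  induction W with
  | nil => intro hu hv; exact absurd hv hu
  | @cons p q r hpq W ih =>
    intro hu hv
    by_cases hq : q ∈ S
    · exact ⟨p, q, Walk.nil, hpq, hq, by simp [hu]⟩
    · obtain ⟨a, c, W1, h1, h2, h3⟩ := ih hq hv
      refine ⟨a, c, Walk.cons hpq W1, h1, h2, ?_⟩
      intro w hw
      rw [Walk.support_cons] at hw
      rcases List.mem_cons.mp hw with hw | hw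
      · subst hw; exact hu
      · exact h3 w hw

/-- If `u` and `v` are not connected avoiding `S`, every geodesic crosses `S`. -/
lemma cross (hconn : G.Connected) (h : ¬ AC G S u v) :
    ∃ s ∈ S, G.dist u v = G.dist u s + G.dist s v := by
  obtain ⟨W, hW⟩ := hconn.exists_walk_length_eq_dist u v
  by_cases hall : ∀ w ∈ W.support, w ∉ S
  · exact absurd ⟨W, hall⟩ h
  · push_neg at hall
    obtain ⟨s, hs1, hs2⟩ := hall
    exact ⟨s, hs2, geo_split hconn W hW hs1⟩

lemma bdd_mono {A B : Set V} (hAB : A ⊆ B) (h : BddSet G B) : BddSet G A := by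
  obtain ⟨D, hD⟩ := h
  exact ⟨D, fun a ha b hb => hD a (hAB ha) b (hAB hb)⟩

lemma bdd_ball (hconn : G.Connected) (x : V) (r : ℕ) : BddSet G (gball G x r) := by
  refine ⟨2 * r, fun a ha b hb => ?_⟩
  have h1 : G.dist x a ≤ r := ha
  have h2 : G.dist x b ≤ r := hb
  have h3 := hconn.dist_triangle (u := a) (v := x) (w := b)
  have h4 : G.dist a x = G.dist x a := SimpleGraph.dist_comm
  omega

lemma unbdd_far {A : Set V} (h : ¬ BddSet G A) (x : V) (hconn : G.Connected) :
    ∀ n : ℕ, ∃ y ∈ A, n ≤ G.dist x y := by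
  intro n
  by_contra hcon
  push_neg at hcon
  refine h ⟨2 * n, fun a ha b hb => ?_⟩
  have h1 := hcon a ha
  have h2 := hcon b hb
  have := hconn.dist_triangle (u := a) (v := x) (w := b)
  have := SimpleGraph.dist_comm (G := G) (u := x) (v := a)
  omega

end Stmt6
end LayerB

section LayerC
open SimpleGraph

namespace Stmt6

variable {V : Type*} {G : SimpleGraph V} {B₀ : Set V} {x₀ : V} {D K' : ℕ}

/-- Three pairwise-separated unbounded classes contradict having at most two ends. -/
lemma hub3 (hub : ∀ B : Set V, BddSet G B → Cardinal.mk ↥(unbddComps G B) ≤ 2)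
    {B : Set V} (hB : BddSet G B) {z₁ z₂ z₃ : V}
    (h1 : z₁ ∉ B) (h2 : z₂ ∉ B) (h3 : z₃ ∉ B)
    (h12 : ¬ AC G B z₁ z₂) (h13 : ¬ AC G B z₁ z₃) (h23 : ¬ AC G B z₂ z₃)
    (hu1 : ¬ BddSet G {y | AC G B z₁ y}) (hu2 : ¬ BddSet G {y | AC G B z₂ y})
    (hu3 : ¬ BddSet G {y | AC G B z₃ y}) : False := by
  have hsub : ∀ (z : V) (hz : z ∉ B), {y | AC G B z y} ⊆
      compVerts G B ((G.induce (Bᶜ : Set V)).connectedComponentMk ⟨z, hz⟩) := by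
    intro z hz y hy
    have hyB : y ∉ B := hy.not_mem_right
    exact ⟨hyB, ((AC_iff_comp (u := z) (v := y) hz hyB).mp hy).symm⟩
  have hmem : ∀ (z : V) (hz : z ∉ B), ¬ BddSet G {y | AC G B z y} →
      (G.induce (Bᶜ : Set V)).connectedComponentMk ⟨z, hz⟩ ∈ unbddComps G B := by
    intro z hz hzu
    exact fun hbdd => hzu (bdd_mono (hsub z hz) hbdd)
  have hne : ∀ (a b : V) (ha : a ∉ B) (hb : b ∉ B), ¬ AC G B a b →
      (G.induce (Bᶜ : Set V)).connectedComponentMk ⟨a, ha⟩ ≠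
        (G.induce (Bᶜ : Set V)).connectedComponentMk ⟨b, hb⟩ := by
    intro a b ha hb hab heq
    exact hab ((AC_iff_comp ha hb).mpr heq)
  set C1 : ↥(unbddComps G B) := ⟨_, hmem z₁ h1 hu1⟩
  set C2 : ↥(unbddComps G B) := ⟨_, hmem z₂ h2 hu2⟩
  set C3 : ↥(unbddComps G B) := ⟨_, hmem z₃ h3 hu3⟩
  have h12' : C1 ≠ C2 := fun h => hne z₁ z₂ h1 h2 h12 (congrArg Subtype.val h)
  have h13' : C1 ≠ C3 := fun h => hne z₁ z₃ h1 h3 h13 (congrArg Subtype.val h)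
  have h23' : C2 ≠ C3 := fun h => hne z₂ z₃ h2 h3 h23 (congrArg Subtype.val h)
  have h2le := hub B hB
  have h2eq : (2 : Cardinal) = Cardinal.mk (ULift.{_, 0} (Fin 2)) := by
    simp [Cardinal.mk_fintype]
  rw [h2eq, Cardinal.le_def] at h2le
  obtain ⟨f⟩ := h2le
  have hf1 : (f C1).down ≠ (f C2).down := fun h => h12' (f.injective (ULift.ext _ _ h))
  have hf2 : (f C1).down ≠ (f C3).down := fun h => h13' (f.injective (ULift.ext _ _ h))
  have hf3 : (f C2).down ≠ (f C3).down := fun h => h23' (f.injective (ULift.ext _ _ h))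
  have e1 : ((f C1).down : Fin 2).val ≠ ((f C2).down : Fin 2).val := fun h => hf1 (Fin.ext h)
  have e2 : ((f C1).down : Fin 2).val ≠ ((f C3).down : Fin 2).val := fun h => hf2 (Fin.ext h)
  have e3 : ((f C2).down : Fin 2).val ≠ ((f C3).down : Fin 2).val := fun h => hf3 (Fin.ext h)
  have l1 := ((f C1).down : Fin 2).isLt
  have l2 := ((f C2).down : Fin 2).isLt
  have l3 := ((f C3).down : Fin 2).isLt
  omega

lemma far_not_mem (hB₀ : ∀ b ∈ B₀, G.dist x₀ b ≤ D) {y : V} (hy : D < G.dist x₀ y) :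
    y ∉ B₀ := fun h => absurd (hB₀ y h) (by omega)

/-- Every class of the complement of `B₀` comes close to `B₀`. -/
lemma exists_near (hconn : G.Connected) (hx₀ : x₀ ∈ B₀) (hB₀ : ∀ b ∈ B₀, G.dist x₀ b ≤ D)
    {Q : Set V} (hQac : ∀ {a b : V}, a ∈ Q → AC G B₀ a b → b ∈ Q)
    (hQB : ∀ a ∈ Q, a ∉ B₀) {q : V} (hq : q ∈ Q) :
    ∃ y ∈ Q, G.dist x₀ y ≤ D + 1 ∧ AC G B₀ q y := by
  obtain ⟨W⟩ := hconn q x₀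
  obtain ⟨a, c, W1, hadj, hcB, havoid⟩ := before_hit W (hQB q hq) hx₀
  have hAC : AC G B₀ q a := ⟨W1, havoid⟩
  refine ⟨a, hQac hq hAC, ?_, hAC⟩
  have h1 : G.dist x₀ a ≤ G.dist x₀ c + 1 := adj_dist_succ hconn hadj.symm
  have h2 := hB₀ c hcB
  omega

/-- An unbounded class of the complement of `B₀` has points at every large radius. -/
lemma exists_rad (hconn : G.Connected) (hx₀ : x₀ ∈ B₀) (hB₀ : ∀ b ∈ B₀, G.dist x₀ b ≤ D)
    {Q : Set V} (hQac : ∀ {a b : V}, a ∈ Q → AC G B₀ a b → b ∈ Q)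
    (hQconn : ∀ {a b : V}, a ∈ Q → b ∈ Q → AC G B₀ a b)
    (hQB : ∀ a ∈ Q, a ∉ B₀) (hQunb : ¬ BddSet G Q) (hQne : Q.Nonempty)
    {n : ℕ} (hn : D + 1 ≤ n) : ∃ w ∈ Q, G.dist x₀ w = n := by
  classical
  obtain ⟨q, hq⟩ := hQne
  obtain ⟨y, hyQ, hyrad, _⟩ := exists_near hconn hx₀ hB₀ hQac hQB hq
  obtain ⟨f, hfQ, hfrad⟩ := unbdd_far hQunb x₀ hconn n
  obtain ⟨Wyf, hWyf⟩ := hQconn hyQ hfQ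
  obtain ⟨w, hw1, hw2⟩ := walk_ivt hconn Wyf n (le_trans hyrad hn) hfrad
  have hACyw : AC G B₀ y w :=
    ⟨Wyf.takeUntil w hw1, fun z hz => hWyf z (Wyf.support_takeUntil_subset hw1 hz)⟩
  exact ⟨w, hQac hyQ hACyw, hw2⟩

end Stmt6
end LayerC

section LayerD
open SimpleGraph

namespace Stmt6

variable {V : Type*} {G : SimpleGraph V} {B₀ P N : Set V} {x₀ : V} {D K' : ℕ}

/-- L1 : pulling back a far-avoiding walk along the quasi-isometry `h` (with `h u = x₀`)
gives a `B₀`-avoiding connection between the images. -/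
lemma pull (hconn : G.Connected) (hB₀ : ∀ b ∈ B₀, G.dist x₀ b ≤ D) (hK' : 1 ≤ K')
    {h : V → V} {u : V} (hu : h u = x₀)
    (hup : ∀ a b, G.dist (h a) (h b) ≤ K' * G.dist a b + K')
    (hlow : ∀ a b, G.dist a b ≤ K' * G.dist (h a) (h b) + K' * K')
    {y y' : V} (W : G.Walk y y')
    (hW : ∀ w ∈ W.support, K' * (D + 3 * K') < G.dist u w) :
    AC G B₀ (h y) (h y') := by
  have hrad : ∀ w : V, K' * (D + 3 * K') < G.dist u w → D + 2 * K' < G.dist x₀ (h w) := by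
    intro w hw
    have hl := hlow u w
    rw [hu] at hl
    have hexp : K' * (D + 3 * K') = K' * D + 2 * (K' * K') + K' * K' := by ring
    have : K' * (D + 2 * K') < K' * G.dist x₀ (h w) := by
      have hexp2 : K' * (D + 2 * K') = K' * D + 2 * (K' * K') := by ring
      omega
    exact lt_of_mul_lt_mul_left this (by omega)
  have hnotB : ∀ w : V, K' * (D + 3 * K') < G.dist u w → h w ∉ B₀ := by
    intro w hw hmem
    have := hB₀ (h w) hmem
    have := hrad w hw
    omega
  induction W with
  | nil => exact AC.refl (hnotB _ (hW _ (by simp)))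
  | @cons a b c hab W' ih =>
    have hedge : AC G B₀ (h a) (h b) := by
      obtain ⟨Wg, hWg⟩ := hconn.exists_walk_length_eq_dist (h a) (h b)
      refine ⟨Wg, fun z hz hmem => ?_⟩
      have hlen : Wg.length ≤ 2 * K' := by
        have h1 := hup a b
        have h2 : G.dist a b = 1 := SimpleGraph.dist_eq_one_iff_adj.mpr hab
        rw [h2, mul_one] at h1
        omega
      have hz1 : G.dist (h a) z ≤ 2 * K' := le_trans (dist_le_of_mem_support Wg hz) hlen
      have hz2 : D + 2 * K' < G.dist x₀ (h a) := hrad a (hW a (by simp))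
      have htri := hconn.dist_triangle (u := x₀) (v := h a) (w := z)
      have hzB := hB₀ z hmem
      have : G.dist x₀ (h a) ≤ G.dist x₀ z + G.dist z (h a) := by
        have := hconn.dist_triangle (u := x₀) (v := z) (w := h a)
        omega
      have hcomm : G.dist z (h a) = G.dist (h a) z := SimpleGraph.dist_comm
      omega
    exact hedge.trans (ih (fun w hw => hW w (by simp [hw])))

/-- L2'' : from every vertex `u`, arbitrarily far points mapping into the two distinct
sides `P` and `N` exist. -/
lemma oppSides (hconn : G.Connected) (hx₀ : x₀ ∈ B₀) (hB₀ : ∀ b ∈ B₀, G.dist x₀ b ≤ D)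
    (hK' : 1 ≤ K')
    (hPac : ∀ {a b : V}, a ∈ P → AC G B₀ a b → b ∈ P)
    (hPconn : ∀ {a b : V}, a ∈ P → b ∈ P → AC G B₀ a b)
    (hPB : ∀ a ∈ P, a ∉ B₀) (hPunb : ¬ BddSet G P) (hPne : P.Nonempty)
    (hNac : ∀ {a b : V}, a ∈ N → AC G B₀ a b → b ∈ N)
    (hNconn : ∀ {a b : V}, a ∈ N → b ∈ N → AC G B₀ a b)
    (hNB : ∀ a ∈ N, a ∉ B₀) (hNunb : ¬ BddSet G N) (hNne : N.Nonempty)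
    (hPN : ∀ a, a ∈ P → a ∈ N → False)
    {h : V → V} {u : V} (hu : h u = x₀)
    (hup : ∀ a b, G.dist (h a) (h b) ≤ K' * G.dist a b + K')
    {C' : ℕ} (hsurj : ∀ y : V, ∃ z : V, G.dist y (h z) ≤ C') (S : ℕ) :
    ∃ zp zn : V, S ≤ G.dist u zp ∧ S ≤ G.dist u zn ∧ ¬ AC G B₀ (h zp) (h zn) := by
  set t₀ : ℕ := K' * S + 2 * C' + K' + K' * K' + D + 2 with ht₀
  obtain ⟨wp, hwpP, hwprad⟩ := exists_rad hconn hx₀ hB₀ hPac hPconn hPB hPunb hPne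
    (n := t₀) (by omega)
  obtain ⟨wn, hwnN, hwnrad⟩ := exists_rad hconn hx₀ hB₀ hNac hNconn hNB hNunb hNne
    (n := t₀) (by omega)
  obtain ⟨zp, hzp⟩ := hsurj wp
  obtain ⟨zn, hzn⟩ := hsurj wn
  have hradp : t₀ ≤ G.dist x₀ (h zp) + C' := by
    have hc : G.dist (h zp) wp = G.dist wp (h zp) := SimpleGraph.dist_comm
    have := hconn.dist_triangle (u := x₀) (v := h zp) (w := wp)
    omega
  have hradn : t₀ ≤ G.dist x₀ (h zn) + C' := by
    have hc : G.dist (h zn) wn = G.dist wn (h zn) := SimpleGraph.dist_comm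
    have := hconn.dist_triangle (u := x₀) (v := h zn) (w := wn)
    omega
  have hfar : ∀ z : V, t₀ ≤ G.dist x₀ (h z) + C' → S ≤ G.dist u z := by
    intro z hz
    have h1 := hup u z
    rw [hu] at h1
    have h2 : K' * S ≤ K' * G.dist u z := by omega
    exact le_of_mul_le_mul_left h2 (by omega)
  refine ⟨zp, zn, hfar zp hradp, hfar zn hradn, fun hAC => ?_⟩
  -- build an avoiding walk from wp to wn
  obtain ⟨Wm, hWm⟩ := hAC
  obtain ⟨Wg1, hWg1⟩ := hconn.exists_walk_length_eq_dist wp (h zp)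
  obtain ⟨Wg2, hWg2⟩ := hconn.exists_walk_length_eq_dist (h zn) wn
  have hg1 : ∀ z ∈ Wg1.support, z ∉ B₀ := by
    intro z hz hmem
    have h1 : G.dist wp z ≤ C' := by
      have := dist_le_of_mem_support Wg1 hz
      omega
    have h2 := hB₀ z hmem
    have htri := hconn.dist_triangle (u := x₀) (v := z) (w := wp)
    have hcomm : G.dist z wp = G.dist wp z := SimpleGraph.dist_comm
    omega
  have hg2 : ∀ z ∈ Wg2.support, z ∉ B₀ := by
    intro z hz hmem
    have h1 : G.dist (h zn) z ≤ C' := by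
      have h0 := dist_le_of_mem_support Wg2 hz
      have hc : G.dist (h zn) wn = G.dist wn (h zn) := SimpleGraph.dist_comm
      omega
    have h2 := hB₀ z hmem
    have htri := hconn.dist_triangle (u := x₀) (v := z) (w := wn)
    have htri2 := hconn.dist_triangle (u := z) (v := h zn) (w := wn)
    have hc1 : G.dist z (h zn) = G.dist (h zn) z := SimpleGraph.dist_comm
    have hc2 : G.dist (h zn) wn = G.dist wn (h zn) := SimpleGraph.dist_comm
    omega
  have hACwpwn : AC G B₀ wp wn := by
    refine ⟨Wg1.append (Wm.append Wg2), fun z hz => ?_⟩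
    rw [Walk.mem_support_append_iff] at hz
    rcases hz with hz | hz
    · exact hg1 z hz
    · rw [Walk.mem_support_append_iff] at hz
      rcases hz with hz | hz
      · exact hWm z hz
      · exact hg2 z hz
  exact hPN wn (hPac hwpP hACwpwn) hwnN

end Stmt6
end LayerD

section LayerE
open SimpleGraph

namespace Stmt6

variable {V : Type*} {G : SimpleGraph V} {B₀ P N : Set V} {x₀ : V} {D K' : ℕ}

lemma mem_gball {v : V} {r : ℕ} : v ∈ gball G x₀ r ↔ G.dist x₀ v ≤ r := Iff.rfl

/-- Routing through the central ball: a point not in the ball-class of `p` can be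
joined to `x₀` by a walk staying far from `p`. -/
lemma route (hconn : G.Connected) {ρ W₁' : ℕ} {p z : V}
    (hp : ρ + W₁' + 2 ≤ G.dist x₀ p) (hz : ¬ AC G (gball G x₀ ρ) p z) :
    ∃ Wz : G.Walk z x₀, ∀ w ∈ Wz.support, W₁' < G.dist p w := by
  classical
  have hball_far : ∀ w : V, G.dist x₀ w ≤ ρ → W₁' < G.dist p w := by
    intro w hw
    have htri := hconn.dist_triangle (u := x₀) (v := w) (w := p)
    have hc : G.dist w p = G.dist p w := SimpleGraph.dist_comm
    omega
  by_cases hzball : G.dist x₀ z ≤ ρ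
  · obtain ⟨Wg, hWg⟩ := hconn.exists_walk_length_eq_dist z x₀
    refine ⟨Wg, fun w hw => ?_⟩
    have hsplit := geo_split hconn Wg hWg hw
    have hc : G.dist z x₀ = G.dist x₀ z := SimpleGraph.dist_comm
    have hc2 : G.dist w x₀ = G.dist x₀ w := SimpleGraph.dist_comm
    exact hball_far w (by omega)
  · obtain ⟨W⟩ := hconn z x₀
    have hx₀ball : x₀ ∈ gball G x₀ ρ := by
      simp [mem_gball, SimpleGraph.dist_self]
    obtain ⟨a, c, W1, hadj, hcball, havoid⟩ :=
      before_hit W (fun hmem => hzball hmem) hx₀ball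
    have hW1far : ∀ w ∈ W1.support, W₁' < G.dist p w := by
      intro w hw
      have hACzw : AC G (gball G x₀ ρ) z w :=
        ⟨W1.takeUntil w hw, fun y hy => havoid y (W1.support_takeUntil_subset hw hy)⟩
      have hnACpw : ¬ AC G (gball G x₀ ρ) p w := fun hACpw => hz (hACpw.trans hACzw.symm)
      obtain ⟨s, hs, hsplit⟩ := cross hconn hnACpw
      have hs' : G.dist x₀ s ≤ ρ := hs
      have htri := hconn.dist_triangle (u := x₀) (v := s) (w := p)
      have hc : G.dist s p = G.dist p s := SimpleGraph.dist_comm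
      omega
    obtain ⟨Wg2, hWg2⟩ := hconn.exists_walk_length_eq_dist c x₀
    refine ⟨(W1.concat hadj).append Wg2, fun w hw => ?_⟩
    rw [Walk.mem_support_append_iff] at hw
    rcases hw with hw | hw
    · rw [Walk.support_concat] at hw
      rw [List.mem_append, List.mem_singleton] at hw
      rcases hw with hw | hw
      · exact hW1far w hw
      · subst hw
        exact hball_far _ hcball
    · have hsplit := geo_split hconn Wg2 hWg2 hw
      have hc : G.dist c x₀ = G.dist x₀ c := SimpleGraph.dist_comm
      have hc2 : G.dist w x₀ = G.dist x₀ w := SimpleGraph.dist_comm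
      have hcball' : G.dist x₀ c ≤ ρ := hcball
      exact hball_far w (by omega)

/-- NoDeepPockets: any point far from the center has unbounded class in the
complement of the ball of radius `ρ`. -/
lemma deep_unbdd (hconn : G.Connected) (hx₀ : x₀ ∈ B₀) (hB₀ : ∀ b ∈ B₀, G.dist x₀ b ≤ D)
    (hK' : 1 ≤ K')
    (hPac : ∀ {a b : V}, a ∈ P → AC G B₀ a b → b ∈ P)
    (hPconn : ∀ {a b : V}, a ∈ P → b ∈ P → AC G B₀ a b)
    (hPB : ∀ a ∈ P, a ∉ B₀) (hPunb : ¬ BddSet G P) (hPne : P.Nonempty)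
    (hNac : ∀ {a b : V}, a ∈ N → AC G B₀ a b → b ∈ N)
    (hNconn : ∀ {a b : V}, a ∈ N → b ∈ N → AC G B₀ a b)
    (hNB : ∀ a ∈ N, a ∉ B₀) (hNunb : ¬ BddSet G N) (hNne : N.Nonempty)
    (hPN : ∀ a, a ∈ P → a ∈ N → False)
    (hmaps : ∀ u : V, ∃ (h : V → V) (C' : ℕ), h u = x₀ ∧
      (∀ a b, G.dist (h a) (h b) ≤ K' * G.dist a b + K') ∧
      (∀ a b, G.dist a b ≤ K' * G.dist (h a) (h b) + K' * K') ∧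
      (∀ y : V, ∃ z : V, G.dist y (h z) ≤ C'))
    {ρ : ℕ} {p : V} (hp : ρ + K' * (D + 3 * K') + 2 ≤ G.dist x₀ p) :
    ¬ BddSet G {y | AC G (gball G x₀ ρ) p y} := by
  intro hbdd
  obtain ⟨Δ, hΔ⟩ := hbdd
  obtain ⟨h, C', hu, hup, hlow, hsurj⟩ := hmaps p
  obtain ⟨zp, zn, hzp, hzn, hnAC⟩ := oppSides hconn hx₀ hB₀ hK' hPac hPconn hPB hPunb hPne
    hNac hNconn hNB hNunb hNne hPN hu hup hsurj (Δ + 1)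
  have hpball : p ∉ gball G x₀ ρ := by
    rw [mem_gball]
    omega
  have hpmem : p ∈ {y | AC G (gball G x₀ ρ) p y} := AC.refl hpball
  have hnACp : ∀ z : V, Δ + 1 ≤ G.dist p z → ¬ AC G (gball G x₀ ρ) p z := by
    intro z hzd hAC
    have := hΔ p hpmem z hAC
    omega
  obtain ⟨W1, hW1⟩ := route hconn (W₁' := K' * (D + 3 * K')) hp (hnACp zp hzp)
  obtain ⟨W2, hW2⟩ := route hconn (W₁' := K' * (D + 3 * K')) hp (hnACp zn hzn)
  apply hnAC
  refine pull hconn hB₀ hK' hu hup hlow (W1.append W2.reverse) ?_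
  intro w hw
  rw [Walk.mem_support_append_iff] at hw
  rcases hw with hw | hw
  · exact hW1 w hw
  · rw [Walk.support_reverse, List.mem_reverse] at hw
    exact hW2 w hw

end Stmt6
end LayerE

section LayerF
open SimpleGraph

namespace Stmt6

variable {V : Type*} {G : SimpleGraph V} {B₀ P N : Set V} {x₀ : V} {D K' : ℕ}

/-- Omega: every far point lies in `P` or `N`. -/
lemma far_PN (hconn : G.Connected) (hx₀ : x₀ ∈ B₀) (hB₀ : ∀ b ∈ B₀, G.dist x₀ b ≤ D)
    (hK' : 1 ≤ K')
    (hPac : ∀ {a b : V}, a ∈ P → AC G B₀ a b → b ∈ P)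
    (hPconn : ∀ {a b : V}, a ∈ P → b ∈ P → AC G B₀ a b)
    (hPB : ∀ a ∈ P, a ∉ B₀) (hPunb : ¬ BddSet G P) (hPne : P.Nonempty)
    (hNac : ∀ {a b : V}, a ∈ N → AC G B₀ a b → b ∈ N)
    (hNconn : ∀ {a b : V}, a ∈ N → b ∈ N → AC G B₀ a b)
    (hNB : ∀ a ∈ N, a ∉ B₀) (hNunb : ¬ BddSet G N) (hNne : N.Nonempty)
    (hPN : ∀ a, a ∈ P → a ∈ N → False)
    (hPNall : ∀ v, v ∉ B₀ → ¬ BddSet G {y | AC G B₀ v y} → v ∈ P ∪ N)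
    (hmaps : ∀ u : V, ∃ (h : V → V) (C' : ℕ), h u = x₀ ∧
      (∀ a b, G.dist (h a) (h b) ≤ K' * G.dist a b + K') ∧
      (∀ a b, G.dist a b ≤ K' * G.dist (h a) (h b) + K' * K') ∧
      (∀ y : V, ∃ z : V, G.dist y (h z) ≤ C'))
    {v : V} (hv : D + K' * (D + 3 * K') + 2 ≤ G.dist x₀ v) : v ∈ P ∪ N := by
  have h1 : ¬ BddSet G {y | AC G (gball G x₀ D) v y} :=
    deep_unbdd hconn hx₀ hB₀ hK' hPac hPconn hPB hPunb hPne hNac hNconn hNB hNunb hNne hPN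
      hmaps (ρ := D) hv
  have hsubB : B₀ ⊆ gball G x₀ D := fun b hb => hB₀ b hb
  have hsub : {y | AC G (gball G x₀ D) v y} ⊆ {y | AC G B₀ v y} :=
    fun y hy => hy.mono hsubB
  exact hPNall v (far_not_mem hB₀ (by omega)) (fun hb => h1 (bdd_mono hsub hb))

/-- Uniqueness of the deep `P`-side class: two far `P`-points are connected
avoiding any central ball. -/
lemma beta_conn (hconn : G.Connected) (hx₀ : x₀ ∈ B₀) (hB₀ : ∀ b ∈ B₀, G.dist x₀ b ≤ D)
    (hK' : 1 ≤ K')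
    (hPac : ∀ {a b : V}, a ∈ P → AC G B₀ a b → b ∈ P)
    (hPconn : ∀ {a b : V}, a ∈ P → b ∈ P → AC G B₀ a b)
    (hPB : ∀ a ∈ P, a ∉ B₀) (hPunb : ¬ BddSet G P) (hPne : P.Nonempty)
    (hNac : ∀ {a b : V}, a ∈ N → AC G B₀ a b → b ∈ N)
    (hNconn : ∀ {a b : V}, a ∈ N → b ∈ N → AC G B₀ a b)
    (hNB : ∀ a ∈ N, a ∉ B₀) (hNunb : ¬ BddSet G N) (hNne : N.Nonempty)
    (hPN : ∀ a, a ∈ P → a ∈ N → False)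
    (hub : ∀ B : Set V, BddSet G B → Cardinal.mk ↥(unbddComps G B) ≤ 2)
    (hmaps : ∀ u : V, ∃ (h : V → V) (C' : ℕ), h u = x₀ ∧
      (∀ a b, G.dist (h a) (h b) ≤ K' * G.dist a b + K') ∧
      (∀ a b, G.dist a b ≤ K' * G.dist (h a) (h b) + K' * K') ∧
      (∀ y : V, ∃ z : V, G.dist y (h z) ≤ C'))
    {ρ₂ : ℕ} (hρ₂ : D ≤ ρ₂) {z z' : V} (hz : z ∈ P) (hz' : z' ∈ P)
    (hrz : ρ₂ + K' * (D + 3 * K') + 2 ≤ G.dist x₀ z)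
    (hrz' : ρ₂ + K' * (D + 3 * K') + 2 ≤ G.dist x₀ z') :
    AC G (gball G x₀ ρ₂) z z' := by
  by_contra hnAC
  obtain ⟨n₂, hn₂N, hn₂rad⟩ := exists_rad hconn hx₀ hB₀ hNac hNconn hNB hNunb hNne
    (n := ρ₂ + K' * (D + 3 * K') + 2) (by omega)
  have hBsub : B₀ ⊆ gball G x₀ ρ₂ := fun b hb => le_trans (hB₀ b hb) hρ₂
  have hnACzn : ¬ AC G (gball G x₀ ρ₂) z n₂ := by
    intro hAC
    exact hPN n₂ (hPac hz (hAC.mono hBsub)) hn₂N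
  have hnACz'n : ¬ AC G (gball G x₀ ρ₂) z' n₂ := by
    intro hAC
    exact hPN n₂ (hPac hz' (hAC.mono hBsub)) hn₂N
  have hnb : ∀ {p : V}, ρ₂ + K' * (D + 3 * K') + 2 ≤ G.dist x₀ p →
      ¬ BddSet G {y | AC G (gball G x₀ ρ₂) p y} := fun {p} hp =>
    deep_unbdd hconn hx₀ hB₀ hK' hPac hPconn hPB hPunb hPne hNac hNconn hNB hNunb hNne hPN
      hmaps hp
  have hnball : ∀ {p : V}, ρ₂ + K' * (D + 3 * K') + 2 ≤ G.dist x₀ p →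
      p ∉ gball G x₀ ρ₂ := by
    intro p hp hmem
    rw [mem_gball] at hmem
    omega
  exact hub3 hub (bdd_ball hconn x₀ ρ₂) (hnball hrz) (hnball hrz')
    (hnball (le_of_eq hn₂rad.symm)) hnAC hnACzn hnACz'n (hnb hrz) (hnb hrz')
    (hnb (le_of_eq hn₂rad.symm))

end Stmt6
end LayerF

section LayerG
open SimpleGraph

namespace Stmt6

variable {V : Type*} {G : SimpleGraph V} {B₀ P N : Set V} {x₀ : V} {D K' : ℕ}

/-- The annulus lemma: two `P`-points on the same large sphere are uniformly close. -/
lemma annulus (hconn : G.Connected) (hx₀ : x₀ ∈ B₀) (hB₀ : ∀ b ∈ B₀, G.dist x₀ b ≤ D)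
    (hK' : 1 ≤ K')
    (hPac : ∀ {a b : V}, a ∈ P → AC G B₀ a b → b ∈ P)
    (hPconn : ∀ {a b : V}, a ∈ P → b ∈ P → AC G B₀ a b)
    (hPB : ∀ a ∈ P, a ∉ B₀) (hPunb : ¬ BddSet G P) (hPne : P.Nonempty)
    (hNac : ∀ {a b : V}, a ∈ N → AC G B₀ a b → b ∈ N)
    (hNconn : ∀ {a b : V}, a ∈ N → b ∈ N → AC G B₀ a b)
    (hNB : ∀ a ∈ N, a ∉ B₀) (hNunb : ¬ BddSet G N) (hNne : N.Nonempty)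
    (hPN : ∀ a, a ∈ P → a ∈ N → False)
    (hPNall : ∀ v, v ∉ B₀ → ¬ BddSet G {y | AC G B₀ v y} → v ∈ P ∪ N)
    (hub : ∀ B : Set V, BddSet G B → Cardinal.mk ↥(unbddComps G B) ≤ 2)
    (hmaps : ∀ u : V, ∃ (h : V → V) (C' : ℕ), h u = x₀ ∧
      (∀ a b, G.dist (h a) (h b) ≤ K' * G.dist a b + K') ∧
      (∀ a b, G.dist a b ≤ K' * G.dist (h a) (h b) + K' * K') ∧
      (∀ y : V, ∃ z : V, G.dist y (h z) ≤ C'))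
    {r : ℕ} (hr : K' * (D + 3 * K') + 2 * D + 8 ≤ r) {u v : V}
    (huP : u ∈ P) (hvP : v ∈ P) (hru : G.dist x₀ u = r) (hrv : G.dist x₀ v = r) :
    G.dist u v ≤ 5 * (K' * (D + 3 * K')) + 5 := by
  classical
  set W₁ : ℕ := K' * (D + 3 * K') with hW₁def
  by_contra hcon
  push_neg at hcon
  have hcomm : ∀ a b : V, G.dist a b = G.dist b a := fun a b => SimpleGraph.dist_comm
  obtain ⟨h, C', hhu, hup, hlow, hsurj⟩ := hmaps u
  obtain ⟨h', C'', hh'v, hup', hlow', hsurj'⟩ := hmaps v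
  -- every N-point is far from a P-point on the sphere of radius r
  have hNfar : ∀ p w : V, p ∈ P → G.dist x₀ p = r → w ∈ N → r ≤ G.dist p w + D := by
    intro p w hp hpr hw
    have hnAC : ¬ AC G B₀ p w := fun hAC => hPN w (hPac hp hAC) hw
    obtain ⟨b, hb, hsplit⟩ := cross hconn hnAC
    have hbD := hB₀ b hb
    have htri := hconn.dist_triangle (u := x₀) (v := b) (w := p)
    have hc := hcomm b p
    omega
  -- geodesics from v to the center avoid the W₁-ball around u (and symmetrically)
  have havoid : ∀ p q : V, G.dist x₀ p = r → G.dist x₀ q = r →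
      5 * W₁ + 5 < G.dist p q →
      ∃ Wv : G.Walk q x₀, Wv.length = G.dist q x₀ ∧ ∀ w ∈ Wv.support, W₁ < G.dist p w := by
    intro p q hpr hqr hpq
    obtain ⟨Wv, hWv⟩ := hconn.exists_walk_length_eq_dist q x₀
    refine ⟨Wv, hWv, fun w hw => ?_⟩
    by_contra hle
    push_neg at hle
    have hsplit := geo_split hconn Wv hWv hw
    have hc1 := hcomm q x₀
    have hc2 := hcomm w x₀
    have hc3 := hcomm w p
    have hc4 := hcomm w q
    have htri1 := hconn.dist_triangle (u := x₀) (v := w) (w := p)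
    have htri2 := hconn.dist_triangle (u := p) (v := w) (w := q)
    omega
  have hsideV : AC G B₀ (h v) (h x₀) := by
    obtain ⟨Wv, hWv, hWvfar⟩ := havoid u v hru hrv hcon
    exact pull hconn hB₀ hK' hhu hup hlow Wv hWvfar
  have hsideU : AC G B₀ (h' u) (h' x₀) := by
    have hvu : 5 * W₁ + 5 < G.dist v u := by rw [← hcomm]; exact hcon
    obtain ⟨Wv, hWv, hWvfar⟩ := havoid v u hrv hru hvu
    exact pull hconn hB₀ hK' hh'v hup' hlow' Wv hWvfar
  -- pick far points with opposite side relative to u resp. v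
  have hpick : ∀ (p : V) (hmap : V → V) (C₀ : ℕ), p ∈ P → G.dist x₀ p = r → hmap p = x₀ →
      (∀ a b, G.dist (hmap a) (hmap b) ≤ K' * G.dist a b + K') →
      (∀ a b, G.dist a b ≤ K' * G.dist (hmap a) (hmap b) + K' * K') →
      (∀ y : V, ∃ z : V, G.dist y (hmap z) ≤ C₀) →
      ∃ z : V, z ∈ P ∧ 2 * r + 2 * W₁ + 8 ≤ G.dist p z ∧
        ¬ AC G B₀ (hmap z) (hmap x₀) := by
    intro p hmap C₀ hpP hpr hmapp hupm hlowm hsurjm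
    obtain ⟨zp, zn, hzp, hzn, hnACz⟩ := oppSides hconn hx₀ hB₀ hK' hPac hPconn hPB hPunb hPne
      hNac hNconn hNB hNunb hNne hPN hmapp hupm hsurjm (2 * r + 2 * W₁ + 8)
    have hzPcase : ∀ z : V, 2 * r + 2 * W₁ + 8 ≤ G.dist p z →
        ¬ AC G B₀ (hmap z) (hmap x₀) → z ∈ P := by
      intro z hzfar hzside
      have hzrad : r + 2 * W₁ + 8 ≤ G.dist x₀ z := by
        have htri := hconn.dist_triangle (u := p) (v := x₀) (w := z)
        have hc := hcomm p x₀
        omega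
      have hzPN : z ∈ P ∪ N := far_PN hconn hx₀ hB₀ hK' hPac hPconn hPB hPunb hPne
        hNac hNconn hNB hNunb hNne hPN hPNall hmaps (by omega)
      rcases hzPN with hq | hN
      · exact hq
      · exfalso
        apply hzside
        obtain ⟨y₁, hy₁N, hy₁rad, hACzy₁⟩ := exists_near hconn hx₀ hB₀ hNac hNB hN
        obtain ⟨Wzy, hWzy⟩ := hACzy₁
        obtain ⟨Wg, hWg⟩ := hconn.exists_walk_length_eq_dist y₁ x₀
        refine pull hconn hB₀ hK' hmapp hupm hlowm (Wzy.append Wg) ?_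
        intro w hw
        rw [Walk.mem_support_append_iff] at hw
        rcases hw with hw | hw
        · -- w ∈ N, far from p
          have hACzw : AC G B₀ z w :=
            ⟨Wzy.takeUntil w hw, fun a ha => hWzy a (Wzy.support_takeUntil_subset hw ha)⟩
          have hwN : w ∈ N := hNac hN hACzw
          have := hNfar p w hpP hpr hwN
          omega
        · -- w on a geodesic from y₁ (close to B₀) to x₀
          have hsplit := geo_split hconn Wg hWg hw
          have hc1 := hcomm y₁ x₀
          have hc2 := hcomm w x₀
          have hc3 := hcomm w p
          have htri := hconn.dist_triangle (u := x₀) (v := w) (w := p)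
          omega
    by_cases hc : AC G B₀ (hmap zp) (hmap x₀)
    · refine ⟨zn, hzPcase zn hzn ?_, hzn, ?_⟩ <;>
        exact fun hc2 => hnACz (hc.trans hc2.symm)
    · exact ⟨zp, hzPcase zp hzp hc, hzp, hc⟩
  obtain ⟨z, hzP, hzfar, hzside⟩ := hpick u h C' huP hru hhu hup hlow hsurj
  obtain ⟨z', hz'P, hz'far, hz'side⟩ := hpick v h' C'' hvP hrv hh'v hup' hlow' hsurj'
  -- the common deep class beyond radius r + W₁
  have hzrad : r + 2 * W₁ + 8 ≤ G.dist x₀ z := by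
    have htri := hconn.dist_triangle (u := u) (v := x₀) (w := z)
    have hc := hcomm u x₀
    omega
  have hz'rad : r + 2 * W₁ + 8 ≤ G.dist x₀ z' := by
    have htri := hconn.dist_triangle (u := v) (v := x₀) (w := z')
    have hc := hcomm v x₀
    omega
  have hACβ : AC G (gball G x₀ (r + W₁)) z z' :=
    beta_conn hconn hx₀ hB₀ hK' hPac hPconn hPB hPunb hPne hNac hNconn hNB hNunb hNne hPN
      hub hmaps (ρ₂ := r + W₁) (by omega) hzP hz'P (by omega) (by omega)
  -- points outside the ball of radius r + W₁ are far from u and from v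
  have hβfaru : ∀ w : V, ¬ G.dist x₀ w ≤ r + W₁ → W₁ < G.dist u w := by
    intro w hw
    have htri := hconn.dist_triangle (u := x₀) (v := u) (w := w)
    omega
  have hβfarv : ∀ w : V, ¬ G.dist x₀ w ≤ r + W₁ → W₁ < G.dist v w := by
    intro w hw
    have htri := hconn.dist_triangle (u := x₀) (v := v) (w := w)
    omega
  -- touchpoint y₂ of the deep class at the sphere of radius r + W₁
  obtain ⟨W⟩ := hconn z' x₀
  have hz'ball : z' ∉ gball G x₀ (r + W₁) := by rw [mem_gball]; omega
  have hx₀ball : x₀ ∈ gball G x₀ (r + W₁) := by rw [mem_gball, SimpleGraph.dist_self]; omega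
  obtain ⟨y₂, c₂, Wβ0, hadj₂, hc₂ball, hWβ0⟩ := before_hit W hz'ball hx₀ball
  have hc₂ball' : G.dist x₀ c₂ ≤ r + W₁ := hc₂ball
  have hy₂rad : G.dist x₀ y₂ ≤ r + W₁ + 1 := by
    have := adj_dist_succ hconn hadj₂.symm (x := x₀)
    omega
  obtain ⟨Wg₂, hWg₂⟩ := hconn.exists_walk_length_eq_dist y₂ x₀
  -- the walk from z' to x₀ must come within W₁ of v
  have hexists : ∃ w ∈ (Wβ0.append Wg₂).support, G.dist v w ≤ W₁ := by
    by_contra hcon2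
    push_neg at hcon2
    exact hz'side (pull hconn hB₀ hK' hh'v hup' hlow' (Wβ0.append Wg₂)
      (fun w hw => by have := hcon2 w hw; omega))
  obtain ⟨wst, hwstmem, hwstclose⟩ := hexists
  -- produce ystar in the deep class close to v
  have hystar : ∃ ystar : V, AC G (gball G x₀ (r + W₁)) z ystar ∧
      G.dist v ystar ≤ 3 * W₁ + 1 := by
    rw [Walk.mem_support_append_iff] at hwstmem
    rcases hwstmem with hw | hw
    · refine ⟨wst, hACβ.trans
        ⟨Wβ0.takeUntil wst hw, fun a ha => hWβ0 a (Wβ0.support_takeUntil_subset hw ha)⟩,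
        by omega⟩
    · have hsplit := geo_split hconn Wg₂ hWg₂ hw
      have hc1 := hcomm y₂ x₀
      have hc2 := hcomm wst x₀
      have hc3 := hcomm wst y₂
      have htri1 := hconn.dist_triangle (u := x₀) (v := wst) (w := v)
      have hc4 := hcomm wst v
      have htri2 := hconn.dist_triangle (u := v) (v := wst) (w := y₂)
      refine ⟨y₂, hACβ.trans ⟨Wβ0, hWβ0⟩, by omega⟩
  obtain ⟨ystar, hystarAC, hystarclose⟩ := hystar
  -- ystar is on the opposite side of u
  have hystarside : ¬ AC G B₀ (h ystar) (h x₀) := by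
    intro hcside
    apply hzside
    obtain ⟨Wβ, hWβ⟩ := hystarAC
    have h1 : AC G B₀ (h z) (h ystar) :=
      pull hconn hB₀ hK' hhu hup hlow Wβ (fun w hw => hβfaru w (hWβ w hw))
    exact h1.trans hcside
  -- final contradiction: the geodesic from v to ystar must pass near u
  obtain ⟨Wf, hWf⟩ := hconn.exists_walk_length_eq_dist v ystar
  have hfinal : ∃ w ∈ Wf.support, G.dist u w ≤ W₁ := by
    by_contra hcon3
    push_neg at hcon3
    have hpulled : AC G B₀ (h v) (h ystar) :=
      pull hconn hB₀ hK' hhu hup hlow Wf (fun w hw => by have := hcon3 w hw; omega)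
    exact hystarside (hpulled.symm.trans hsideV)
  obtain ⟨w₀, hw₀mem, hw₀close⟩ := hfinal
  have hsplit := geo_split hconn Wf hWf hw₀mem
  have htri := hconn.dist_triangle (u := v) (v := w₀) (w := u)
  have hc1 := hcomm w₀ u
  have hc2 := hcomm v u
  omega

end Stmt6
end LayerG

section LayerH
open SimpleGraph

namespace Stmt6

theorem main {V : Type*} (G : SimpleGraph V) (hconn : G.Connected)
    (hct : CoarselyTransitive G)
    (hub : ∀ B : Set V, BddSet G B → Cardinal.mk ↥(unbddComps G B) ≤ 2)
    (hex : ∃ B : Set V, BddSet G B ∧ Cardinal.mk ↥(unbddComps G B) = 2) :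
    ∃ (L A : ℝ) (f : ℤ → V), 1 ≤ L ∧ 0 ≤ A ∧
      IsQI (fun a b : ℤ => |(a : ℝ) - (b : ℝ)|) (gdist G) L A f := by
  classical
  obtain ⟨B₀, hB₀bdd, hcard⟩ := hex
  obtain ⟨Ca, Cb, hCab, hCuniv⟩ := Cardinal.mk_eq_two_iff.mp hcard
  set P : Set V := compVerts G B₀ Ca.1 with hPdef
  set N : Set V := compVerts G B₀ Cb.1 with hNdef
  have hPB : ∀ a ∈ P, a ∉ B₀ := fun a ha => ha.1
  have hNB : ∀ a ∈ N, a ∉ B₀ := fun a ha => ha.1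
  have hPconn : ∀ {a b : V}, a ∈ P → b ∈ P → AC G B₀ a b := by
    intro a b ha hb
    obtain ⟨ha1, ha2⟩ := ha
    obtain ⟨hb1, hb2⟩ := hb
    exact (AC_iff_comp ha1 hb1).mpr (ha2.trans hb2.symm)
  have hNconn : ∀ {a b : V}, a ∈ N → b ∈ N → AC G B₀ a b := by
    intro a b ha hb
    obtain ⟨ha1, ha2⟩ := ha
    obtain ⟨hb1, hb2⟩ := hb
    exact (AC_iff_comp ha1 hb1).mpr (ha2.trans hb2.symm)
  have hPac : ∀ {a b : V}, a ∈ P → AC G B₀ a b → b ∈ P := by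
    intro a b ha hAC
    obtain ⟨ha1, ha2⟩ := ha
    have hb1 : b ∈ (B₀ᶜ : Set V) := hAC.not_mem_right
    exact ⟨hb1, ((AC_iff_comp ha1 hb1).mp hAC).symm.trans ha2⟩
  have hNac : ∀ {a b : V}, a ∈ N → AC G B₀ a b → b ∈ N := by
    intro a b ha hAC
    obtain ⟨ha1, ha2⟩ := ha
    have hb1 : b ∈ (B₀ᶜ : Set V) := hAC.not_mem_right
    exact ⟨hb1, ((AC_iff_comp ha1 hb1).mp hAC).symm.trans ha2⟩
  have hPunb : ¬ BddSet G P := Ca.2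
  have hNunb : ¬ BddSet G N := Cb.2
  have hPne : P.Nonempty := by
    rcases Set.eq_empty_or_nonempty P with h | h
    · exact absurd (h ▸ ⟨0, by simp⟩ : BddSet G P) hPunb
    · exact h
  have hNne : N.Nonempty := by
    rcases Set.eq_empty_or_nonempty N with h | h
    · exact absurd (h ▸ ⟨0, by simp⟩ : BddSet G N) hNunb
    · exact h
  have hPN : ∀ a, a ∈ P → a ∈ N → False := by
    intro a haP haN
    obtain ⟨h1, h2⟩ := haP
    obtain ⟨h1', h2'⟩ := haN
    have : Ca.1 = Cb.1 := by
      rw [← h2, h2']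
    exact hCab (Subtype.ext this)
  have hPNall : ∀ v, v ∉ B₀ → ¬ BddSet G {y | AC G B₀ v y} → v ∈ P ∪ N := by
    intro v hv hunb
    have hv' : v ∈ (B₀ᶜ : Set V) := hv
    set C := (G.induce (B₀ᶜ : Set V)).connectedComponentMk ⟨v, hv'⟩ with hC
    have hsub : {y | AC G B₀ v y} ⊆ compVerts G B₀ C := by
      intro y hy
      have hyB : y ∈ (B₀ᶜ : Set V) := hy.not_mem_right
      exact ⟨hyB, ((AC_iff_comp hv' hyB).mp hy).symm⟩
    have hCmem : C ∈ unbddComps G B₀ := fun hbdd => hunb (bdd_mono hsub hbdd)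
    have : (⟨C, hCmem⟩ : ↥(unbddComps G B₀)) ∈ ({Ca, Cb} : Set ↥(unbddComps G B₀)) := by
      rw [hCuniv]; trivial
    have hvC : v ∈ compVerts G B₀ C := ⟨hv', rfl⟩
    rcases this with h | h
    · left
      rw [hPdef, ← congrArg Subtype.val h]
      exact hvC
    · right
      rw [hNdef, ← congrArg Subtype.val h]
      exact hvC
  -- the basepoint
  obtain ⟨p₀, hp₀⟩ := id hPne
  obtain ⟨n₀, hn₀⟩ := id hNne
  have hnACpn : ¬ AC G B₀ p₀ n₀ := fun hAC => hPN n₀ (hPac hp₀ hAC) hn₀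
  obtain ⟨x₀, hx₀, _⟩ := cross hconn hnACpn
  obtain ⟨D, hD⟩ := hB₀bdd
  have hB₀ : ∀ b ∈ B₀, G.dist x₀ b ≤ D := fun b hb => hD x₀ hx₀ b hb
  -- the quasi-isometries, naturalized
  obtain ⟨K, hK1, hKf⟩ := hct
  set K' : ℕ := ⌈K⌉₊ with hK'def
  have hKK' : K ≤ (K' : ℝ) := Nat.le_ceil K
  have hK' : 1 ≤ K' := Nat.one_le_ceil_iff.mpr (by linarith)
  have hmaps : ∀ u : V, ∃ (h : V → V) (C' : ℕ), h u = x₀ ∧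
      (∀ a b, G.dist (h a) (h b) ≤ K' * G.dist a b + K') ∧
      (∀ a b, G.dist a b ≤ K' * G.dist (h a) (h b) + K' * K') ∧
      (∀ y : V, ∃ z : V, G.dist y (h z) ≤ C') := by
    intro u
    obtain ⟨h, ⟨hqie, ⟨C, hC0, hCs⟩⟩, hhu⟩ := hKf u x₀
    have hKpos : (0 : ℝ) < K := by linarith
    refine ⟨h, ⌈C⌉₊, hhu, ?_, ?_, ?_⟩
    · intro a b
      have h1 := (hqie a b).2
      have h2 : (G.dist (h a) (h b) : ℝ) ≤ (K' : ℝ) * (G.dist a b : ℝ) + K' := by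
        unfold gdist at h1
        have : K * (G.dist a b : ℝ) + K ≤ (K' : ℝ) * (G.dist a b : ℝ) + K' := by
          have := mul_le_mul_of_nonneg_right hKK' (Nat.cast_nonneg (G.dist a b))
          linarith
        linarith
      exact_mod_cast h2
    · intro a b
      have h1 := (hqie a b).1
      unfold gdist at h1
      have h1x : 1 / K * (G.dist a b : ℝ) ≤ (G.dist (h a) (h b) : ℝ) + K := by linarith
      have h2 : (G.dist a b : ℝ) ≤ K * ((G.dist (h a) (h b) : ℝ) + K) := by
        have h2x := mul_le_mul_of_nonneg_left h1x (le_of_lt hKpos)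
        rw [← mul_assoc, mul_one_div, div_self (ne_of_gt hKpos), one_mul] at h2x
        exact h2x
      have h3 : (G.dist a b : ℝ) ≤ (K' : ℝ) * (G.dist (h a) (h b) : ℝ) + (K' : ℝ) * K' := by
        have hd : (0:ℝ) ≤ (G.dist (h a) (h b) : ℝ) := Nat.cast_nonneg _
        nlinarith
      exact_mod_cast h3
    · intro y
      obtain ⟨z, hz⟩ := hCs y
      refine ⟨z, ?_⟩
      have : (G.dist y (h z) : ℝ) ≤ (⌈C⌉₊ : ℝ) := le_trans hz (Nat.le_ceil C)
      exact_mod_cast this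
  -- key constants
  set W₁ : ℕ := K' * (D + 3 * K') with hW₁def
  have hW₁D : D + 3 ≤ W₁ := by
    have : 1 * (D + 3 * 1) ≤ K' * (D + 3 * K') := by
      apply Nat.mul_le_mul hK'
      omega
    omega
  set r₁ : ℕ := W₁ + 2 * D + 8 with hr₁def
  set M : ℕ := 5 * W₁ + 5 with hMdef
  -- specializations of the annulus lemma
  have hannP : ∀ {r : ℕ} {u v : V}, r₁ ≤ r → u ∈ P → v ∈ P → G.dist x₀ u = r →
      G.dist x₀ v = r → G.dist u v ≤ M :=
    fun {r u v} hr hu hv h1 h2 =>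
      annulus hconn hx₀ hB₀ hK' hPac hPconn hPB hPunb hPne hNac hNconn hNB hNunb hNne hPN
        hPNall hub hmaps hr hu hv h1 h2
  have hannN : ∀ {r : ℕ} {u v : V}, r₁ ≤ r → u ∈ N → v ∈ N → G.dist x₀ u = r →
      G.dist x₀ v = r → G.dist u v ≤ M := by
    intro r u v hr hu hv h1 h2
    have hNP : ∀ a, a ∈ N → a ∈ P → False := fun a h1 h2 => hPN a h2 h1
    have hNPall : ∀ w, w ∉ B₀ → ¬ BddSet G {y | AC G B₀ w y} → w ∈ N ∪ P := by
      intro w hw hbw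
      rcases hPNall w hw hbw with h | h
      · exact Or.inr h
      · exact Or.inl h
    exact annulus hconn hx₀ hB₀ hK' hNac hNconn hNB hNunb hNne hPac hPconn hPB hPunb hPne
      hNP hNPall hub hmaps hr hu hv h1 h2
  -- chosen points of P and N at every large radius
  have hexP : ∀ n : ℕ, ∃ w : V, r₁ < n → w ∈ P ∧ G.dist x₀ w = n := by
    intro n
    by_cases hn : r₁ < n
    · obtain ⟨w, hw1, hw2⟩ := exists_rad hconn hx₀ hB₀ hPac hPconn hPB hPunb hPne
        (n := n) (by omega)
      exact ⟨w, fun _ => ⟨hw1, hw2⟩⟩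
    · exact ⟨x₀, fun hc => absurd hc hn⟩
  have hexN : ∀ n : ℕ, ∃ w : V, r₁ < n → w ∈ N ∧ G.dist x₀ w = n := by
    intro n
    by_cases hn : r₁ < n
    · obtain ⟨w, hw1, hw2⟩ := exists_rad hconn hx₀ hB₀ hNac hNconn hNB hNunb hNne
        (n := n) (by omega)
      exact ⟨w, fun _ => ⟨hw1, hw2⟩⟩
    · exact ⟨x₀, fun hc => absurd hc hn⟩
  choose fP hfP using hexP
  choose fN hfN using hexN
  set f : ℤ → V := fun a =>
    if (r₁ : ℤ) < a then fP a.toNat else if a < -(r₁ : ℤ) then fN (-a).toNat else x₀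
    with hfdef
  have hfPz : ∀ a : ℤ, (r₁ : ℤ) < a → f a ∈ P ∧ G.dist x₀ (f a) = a.toNat := by
    intro a ha
    have he : f a = fP a.toNat := by rw [hfdef]; simp only [if_pos ha]
    rw [he]
    exact hfP a.toNat (by omega)
  have hfNz : ∀ a : ℤ, a < -(r₁ : ℤ) → f a ∈ N ∧ G.dist x₀ (f a) = (-a).toNat := by
    intro a ha
    have he : f a = fN (-a).toNat := by
      simp only [hfdef]
      rw [if_neg (by omega), if_pos ha]
    rw [he]
    exact hfN (-a).toNat (by omega)
  have hfMz : ∀ a : ℤ, -(r₁ : ℤ) ≤ a → a ≤ (r₁ : ℤ) → f a = x₀ := by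
    intro a h1 h2
    simp only [hfdef]
    rw [if_neg (by omega), if_neg (by omega)]
  -- same-side upper bound
  have hupSame : ∀ (Q : Set V), (∀ {a b : V}, a ∈ Q → AC G B₀ a b → b ∈ Q) →
      (∀ {rr : ℕ} {u' v' : V}, r₁ ≤ rr → u' ∈ Q → v' ∈ Q → G.dist x₀ u' = rr →
        G.dist x₀ v' = rr → G.dist u' v' ≤ M) →
      ∀ {m n : ℕ} {u' v' : V}, r₁ < m → r₁ < n → m ≤ n → u' ∈ Q → v' ∈ Q →
      G.dist x₀ u' = m → G.dist x₀ v' = n → G.dist u' v' ≤ (n - m) + M := by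
    intro Q hQac hann m n u' v' hm hn hmn hu' hv' hur hvr
    obtain ⟨w, Wk, hw1, hw2, hw3⟩ := descend hconn x₀ (n - m) m v' (by omega)
    have hwQ : w ∈ Q := by
      have hACwv : AC G B₀ w v' :=
        ⟨Wk, fun z hz => far_not_mem hB₀ (by have := hw2 z hz; omega)⟩
      exact hQac hv' hACwv.symm
    have hdwv : G.dist w v' ≤ n - m := by
      rw [← hw3]; exact SimpleGraph.dist_le Wk
    have huw := hann (le_of_lt hm) hu' hwQ hur hw1
    have htri := hconn.dist_triangle (u := u') (v := w) (w := v')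
    omega
  -- cross-side lower bound
  have hcross : ∀ {u' v' : V}, u' ∈ P → v' ∈ N →
      G.dist x₀ u' + G.dist x₀ v' ≤ G.dist u' v' + 2 * D := by
    intro u' v' hu' hv'
    have hnAC : ¬ AC G B₀ u' v' := fun hAC => hPN v' (hPac hu' hAC) hv'
    obtain ⟨b, hb, hsplit⟩ := cross hconn hnAC
    have h1 := hB₀ b hb
    have htri1 := hconn.dist_triangle (u := x₀) (v := b) (w := u')
    have htri2 := hconn.dist_triangle (u := x₀) (v := b) (w := v')
    have hc1 : G.dist b u' = G.dist u' b := SimpleGraph.dist_comm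
    omega
  set A' : ℕ := M + 2 * r₁ + 2 * D + 2 with hA'def
  -- the key two-sided bound, for ordered pairs
  have hkey : ∀ a b : ℤ, a ≤ b →
      G.dist (f a) (f b) ≤ (b - a).toNat + A' ∧ (b - a).toNat ≤ G.dist (f a) (f b) + A' := by
    intro a b hab
    by_cases haP : (r₁ : ℤ) < a
    · have hbP : (r₁ : ℤ) < b := lt_of_lt_of_le haP hab
      obtain ⟨haPmem, haRad⟩ := hfPz a haP
      obtain ⟨hbPmem, hbRad⟩ := hfPz b hbP
      have hup := hupSame P hPac (fun {rr u' v'} h1 h2 h3 h4 h5 => hannP h1 h2 h3 h4 h5)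
        (m := a.toNat) (n := b.toNat) (by omega) (by omega) (by omega) haPmem hbPmem haRad hbRad
      have hlow : b.toNat ≤ a.toNat + G.dist (f a) (f b) := by
        have := hconn.dist_triangle (u := x₀) (v := f a) (w := f b)
        omega
      constructor
      · omega
      · omega
    · by_cases haN : a < -(r₁ : ℤ)
      · by_cases hbP : (r₁ : ℤ) < b
        · obtain ⟨haN1, haN2⟩ := hfNz a haN
          obtain ⟨hbP1, hbP2⟩ := hfPz b hbP
          have hupb : G.dist (f a) (f b) ≤ (-a).toNat + b.toNat := by
            have htri := hconn.dist_triangle (u := f a) (v := x₀) (w := f b)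
            have hc : G.dist (f a) x₀ = G.dist x₀ (f a) := SimpleGraph.dist_comm
            omega
          have hlowb := hcross hbP1 haN1
          have hc2 : G.dist (f b) (f a) = G.dist (f a) (f b) := SimpleGraph.dist_comm
          constructor
          · omega
          · omega
        · by_cases hbN : b < -(r₁ : ℤ)
          · obtain ⟨haN1, haN2⟩ := hfNz a haN
            obtain ⟨hbN1, hbN2⟩ := hfNz b hbN
            have hup := hupSame N hNac (fun {rr u' v'} h1 h2 h3 h4 h5 => hannN h1 h2 h3 h4 h5)
              (m := (-b).toNat) (n := (-a).toNat) (by omega) (by omega) (by omega)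
              hbN1 haN1 hbN2 haN2
            have hc2 : G.dist (f b) (f a) = G.dist (f a) (f b) := SimpleGraph.dist_comm
            have hlow : (-a).toNat ≤ (-b).toNat + G.dist (f a) (f b) := by
              have := hconn.dist_triangle (u := x₀) (v := f b) (w := f a)
              omega
            constructor
            · omega
            · omega
          · have hfb : f b = x₀ := hfMz b (by omega) (by omega)
            obtain ⟨haN1, haN2⟩ := hfNz a haN
            have hc : G.dist (f a) (f b) = G.dist x₀ (f a) := by
              rw [hfb]; exact SimpleGraph.dist_comm
            constructor
            · omega
            · omega
      · have hfa : f a = x₀ := hfMz a (by omega) (by omega)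
        by_cases hbP : (r₁ : ℤ) < b
        · obtain ⟨hbP1, hbP2⟩ := hfPz b hbP
          have hc : G.dist (f a) (f b) = G.dist x₀ (f b) := by rw [hfa]
          constructor
          · omega
          · omega
        · have hfb : f b = x₀ := hfMz b (by omega) (by omega)
          have hc : G.dist (f a) (f b) = 0 := by
            rw [hfa, hfb, SimpleGraph.dist_self]
          constructor
          · omega
          · omega
  -- coarse surjectivity, ℕ-level
  have hsurjf : ∀ y : V, ∃ a : ℤ, G.dist y (f a) ≤ D + W₁ + 2 + r₁ + M := by
    intro y
    by_cases hy : G.dist x₀ y ≤ D + W₁ + 2 + r₁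
    · refine ⟨0, ?_⟩
      have hf0 : f 0 = x₀ := hfMz 0 (by omega) (by omega)
      rw [hf0]
      have hc : G.dist y x₀ = G.dist x₀ y := SimpleGraph.dist_comm
      omega
    · push_neg at hy
      have hyPN : y ∈ P ∪ N := far_PN hconn hx₀ hB₀ hK' hPac hPconn hPB hPunb hPne
        hNac hNconn hNB hNunb hNne hPN hPNall hmaps (by omega)
      rcases hyPN with hyP | hyN
      · refine ⟨((G.dist x₀ y : ℕ) : ℤ), ?_⟩
        have htP : (r₁ : ℤ) < ((G.dist x₀ y : ℕ) : ℤ) := by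
          have : r₁ < G.dist x₀ y := by omega
          exact_mod_cast this
        obtain ⟨hfP1, hfP2⟩ := hfPz _ htP
        have hrad : G.dist x₀ (f ((G.dist x₀ y : ℕ) : ℤ)) = G.dist x₀ y := by
          rw [hfP2]; simp
        have hd := hannP (r := G.dist x₀ y) (by omega) hyP hfP1 rfl hrad
        omega
      · refine ⟨-((G.dist x₀ y : ℕ) : ℤ), ?_⟩
        have htN : -((G.dist x₀ y : ℕ) : ℤ) < -(r₁ : ℤ) := by
          have : r₁ < G.dist x₀ y := by omega
          omega
        obtain ⟨hfN1, hfN2⟩ := hfNz _ htN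
        have hrad : G.dist x₀ (f (-((G.dist x₀ y : ℕ) : ℤ))) = G.dist x₀ y := by
          rw [hfN2]; simp
        have hd := hannN (r := G.dist x₀ y) (by omega) hyN hfN1 rfl hrad
        omega
  -- realification
  refine ⟨1, (A' : ℝ), f, le_refl 1, Nat.cast_nonneg A', ⟨?_, ?_⟩⟩
  · intro a b
    show 1 / 1 * |(a : ℝ) - (b : ℝ)| - (A' : ℝ) ≤ gdist G (f a) (f b) ∧
      gdist G (f a) (f b) ≤ 1 * |(a : ℝ) - (b : ℝ)| + (A' : ℝ)
    have hmain : ∀ a b : ℤ, a ≤ b →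
        (1 / 1) * |(a : ℝ) - (b : ℝ)| - (A' : ℝ) ≤ gdist G (f a) (f b) ∧
          gdist G (f a) (f b) ≤ 1 * |(a : ℝ) - (b : ℝ)| + (A' : ℝ) := by
      intro a b hab
      obtain ⟨h1, h2⟩ := hkey a b hab
      have hba : (a : ℝ) ≤ (b : ℝ) := by exact_mod_cast hab
      have habs : |(a : ℝ) - (b : ℝ)| = (((b - a).toNat : ℕ) : ℝ) := by
        rw [abs_sub_comm, abs_of_nonneg (by linarith)]
        have h3 : (((b - a).toNat : ℕ) : ℝ) = (((b - a) : ℤ) : ℝ) := by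
          rw [← Int.cast_natCast]
          congr 1
          omega
        rw [h3]
        push_cast
        ring
      have hg : gdist G (f a) (f b) = ((G.dist (f a) (f b) : ℕ) : ℝ) := rfl
      rw [habs, hg, one_div_one, one_mul]
      constructor
      · have h2' : (((b - a).toNat : ℕ) : ℝ) ≤ ((G.dist (f a) (f b) : ℕ) : ℝ) + (A' : ℝ) := by
          exact_mod_cast h2
        linarith
      · have h1' : ((G.dist (f a) (f b) : ℕ) : ℝ) ≤ (((b - a).toNat : ℕ) : ℝ) + (A' : ℝ) := by
          exact_mod_cast h1
        linarith
    rcases le_total a b with hab | hab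
    · exact hmain a b hab
    · obtain ⟨hh1, hh2⟩ := hmain b a hab
      have hcomm : gdist G (f a) (f b) = gdist G (f b) (f a) := by
        unfold gdist
        rw [SimpleGraph.dist_comm]
      have habs2 : |(a : ℝ) - (b : ℝ)| = |(b : ℝ) - (a : ℝ)| := abs_sub_comm _ _
      rw [hcomm, habs2]
      exact ⟨hh1, hh2⟩
  · refine ⟨((D + W₁ + 2 + r₁ + M : ℕ) : ℝ), Nat.cast_nonneg _, fun y => ?_⟩
    obtain ⟨a, ha⟩ := hsurjf y
    refine ⟨a, ?_⟩
    have hcast : (G.dist y (f a) : ℝ) ≤ ((D + W₁ + 2 + r₁ + M : ℕ) : ℝ) := by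
      exact_mod_cast ha
    exact hcast

end Stmt6
end LayerH

/-- a connected coarsely transitive graph with exactly two ends is
quasi-isometric to `ℤ` (with the metric `|a - b|`). -/
theorem stmt6 {V : Type*} (G : SimpleGraph V) (hconn : G.Connected)
    (hct : CoarselyTransitive G)
    (hub : ∀ B : Set V, BddSet G B → Cardinal.mk ↥(unbddComps G B) ≤ 2)
    (hex : ∃ B : Set V, BddSet G B ∧ Cardinal.mk ↥(unbddComps G B) = 2) :
    ∃ (L A : ℝ) (f : ℤ → V), 1 ≤ L ∧ 0 ≤ A ∧
      IsQI (fun a b : ℤ => |(a : ℝ) - (b : ℝ)|) (gdist G) L A f :=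
  Stmt6.main G hconn hct hub hex
end

section
/- Let X be a connected coarsely transitive graph. If there exists a bounded set B₀ of vertices such that the complement of B₀ has at least 3 unbounded connected components, then for every M > 0 there exists a bounded set B of vertices such that the complement of B has more than M unbounded connected components. Consequently, a coarsely transitive graph has either zero, one, two, or infinitely many ends. -/
/-!
Coarse transitivity copies a bounded set `B₀` with three unbounded complementary components,
with uniformly bounded size, to the neighbourhood of every vertex: the copy near `y` is the
preimage of a ball around `B₀` under a quasi-isometry sending `y` to the centre of that ball.
Its three complementary components stay unbounded because each component of `B₀ᶜ` contains an
unbounded component of the complement of every ball; otherwise a quasi-isometry moving a deep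
point of that component near `B₀` would join far points of two different components around `B₀`.

Given a bounded set `B`, place such a copy `Q` deep inside an unbounded component `D` of `Bᶜ`.
Everything outside `D` is joined to `B` avoiding `Q`, so at most one of the three unbounded
components of `Qᶜ` leaves `D`, and `B ∪ Q` has one more unbounded complementary component than
`B`. Iterating gives arbitrarily many.
-/

open SimpleGraph Cardinal

universe u

variable {V : Type u} {G : SimpleGraph V}

def ReachableOutside (G : SimpleGraph V) (S : Set V) (u v : V) : Prop :=
  ∃ p : G.Walk u v, ∀ x ∈ p.support, x ∉ S

def compOutside (G : SimpleGraph V) (S : Set V) (v : V) : Set V :=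
  {u | ReachableOutside G S u v}

namespace ReachableOutside

variable {S T : Set V} {u v w : V}

lemma left_notMem (h : ReachableOutside G S u v) : u ∉ S :=
  h.elim fun p hp => hp u p.start_mem_support

lemma right_notMem (h : ReachableOutside G S u v) : v ∉ S :=
  h.elim fun p hp => hp v p.end_mem_support

lemma refl (hv : v ∉ S) : ReachableOutside G S v v :=
  ⟨.nil, by simpa using hv⟩

lemma symm (h : ReachableOutside G S u v) : ReachableOutside G S v u := by
  obtain ⟨p, hp⟩ := h
  exact ⟨p.reverse, by simpa using hp⟩

lemma trans (h : ReachableOutside G S u v) (h' : ReachableOutside G S v w) :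
    ReachableOutside G S u w := by
  obtain ⟨p, hp⟩ := h
  obtain ⟨q, hq⟩ := h'
  refine ⟨p.append q, fun x hx => ?_⟩
  rcases (Walk.mem_support_append_iff p q).mp hx with hx | hx
  exacts [hp x hx, hq x hx]

lemma mono (hST : S ⊆ T) (h : ReachableOutside G T u v) : ReachableOutside G S u v :=
  h.elim fun p hp => ⟨p, fun x hx hxS => hp x hx (hST hxS)⟩

lemma of_adj (h : G.Adj u v) (hu : u ∉ S) (hv : v ∉ S) : ReachableOutside G S u v :=
  ⟨.cons h .nil, by simp [hu, hv]⟩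

lemma of_dist_le (hc : G.Connected) {ℓ : ℕ} (huv : G.dist u v ≤ ℓ)
    (hS : ∀ x, G.dist u x ≤ ℓ → x ∉ S) : ReachableOutside G S u v := by
  classical
  obtain ⟨p, hp⟩ := hc.exists_walk_length_eq_dist u v
  refine ⟨p, fun x hx => hS x ?_⟩
  calc G.dist u x ≤ (p.takeUntil x hx).length := dist_le _
    _ ≤ p.length := p.length_takeUntil_le_length hx
    _ ≤ ℓ := hp ▸ huv

lemma iff_reachable_induce :
    ReachableOutside G S u v ↔
      ∃ (hu : u ∈ Sᶜ) (hv : v ∈ Sᶜ),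
        (G.induce Sᶜ).Reachable ⟨u, hu⟩ ⟨v, hv⟩ := by
  constructor
  · rintro ⟨p, hp⟩
    exact ⟨hp u p.start_mem_support, hp v p.end_mem_support, ⟨p.induce Sᶜ hp⟩⟩
  · rintro ⟨hu, hv, ⟨p⟩⟩
    refine ⟨p.map (Embedding.induce Sᶜ).toHom, fun x hx => ?_⟩
    obtain ⟨y, -, rfl⟩ := List.mem_map.mp (Walk.support_map _ p ▸ hx)
    exact y.2

end ReachableOutside

section compOutside

variable {S T : Set V} {u v w x y : V}

lemma ReachableOutside.mem_compOutside_of_mem_support {p : G.Walk u v}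
    (hp : ∀ x ∈ p.support, x ∉ S) (hx : x ∈ p.support) : x ∈ compOutside G S v := by
  classical
  exact ⟨p.dropUntil x hx, fun y hy => hp y (p.support_dropUntil_subset_support hx hy)⟩

lemma compOutside_eq_of_mem (h : u ∈ compOutside G S v) :
    compOutside G S u = compOutside G S v :=
  Set.ext fun _ => ⟨fun hw => hw.trans h, fun hw => hw.trans h.symm⟩

lemma disjoint_compOutside (h : ¬ ReachableOutside G S u v) :
    Disjoint (compOutside G S u) (compOutside G S v) :=
  Set.disjoint_left.mpr fun _ hu hv => h (hu.symm.trans hv)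

lemma disjoint_compOutside_self : Disjoint (compOutside G S v) S :=
  Set.disjoint_left.mpr fun _ hu => hu.left_notMem

lemma compOutside_union_of_disjoint (h : Disjoint (compOutside G S v) T) :
    compOutside G (S ∪ T) v = compOutside G S v := by
  refine (Set.ext fun u => ⟨ReachableOutside.mono Set.subset_union_left, ?_⟩)
  rintro ⟨p, hp⟩
  refine ⟨p, fun x hx hxST => ?_⟩
  have hxS : x ∈ compOutside G S v := ReachableOutside.mem_compOutside_of_mem_support hp hx
  exact hxST.elim hxS.left_notMem (Set.disjoint_left.mp h hxS)

lemma compVerts_connectedComponentMk (hv : v ∈ Sᶜ) :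
    compVerts G S ((G.induce Sᶜ).connectedComponentMk ⟨v, hv⟩) = compOutside G S v := by
  ext u
  simp only [compVerts, compOutside, Set.mem_ofPred_eq, ConnectedComponent.eq,
    ReachableOutside.iff_reachable_induce]
  exact ⟨fun ⟨hu, h⟩ => ⟨hu, hv, h⟩, fun ⟨hu, _, h⟩ => ⟨hu, h⟩⟩

lemma notMem_of_not_bddSet_compOutside (h : ¬ BddSet G (compOutside G S v)) : v ∉ S :=
  fun hv => h ⟨0, fun _ hu => absurd hv hu.right_notMem⟩

end compOutside

section Metric

variable {S T Q : Set V} {u v x y : V}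

lemma bddSet_iff_subset_gball (hc : G.Connected) (x : V) :
    BddSet G S ↔ ∃ r, S ⊆ gball G x r := by
  constructor
  · rintro ⟨D, hD⟩
    rcases S.eq_empty_or_nonempty with rfl | ⟨s, hs⟩
    · exact ⟨0, Set.empty_subset _⟩
    · exact ⟨G.dist x s + D, fun u hu =>
        (hc.dist_triangle).trans (Nat.add_le_add_left (hD s hs u hu) _)⟩
  · rintro ⟨r, hr⟩
    refine ⟨r + r, fun u hu v hv => ?_⟩
    have hu' : G.dist x u ≤ r := hr hu
    have hv' : G.dist x v ≤ r := hr hv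
    calc G.dist u v ≤ G.dist u x + G.dist x v := hc.dist_triangle
      _ ≤ r + r := by rw [SimpleGraph.dist_comm]; omega

lemma BddSet.subset {T : Set V} (hT : BddSet G T) (hST : S ⊆ T) : BddSet G S :=
  hT.elim fun D hD => ⟨D, fun u hu v hv => hD u (hST hu) v (hST hv)⟩

lemma exists_lt_dist_of_not_bddSet (hc : G.Connected) (x : V) (h : ¬ BddSet G S) (r : ℕ) :
    ∃ u ∈ S, r < G.dist x u := by
  by_contra! hr
  exact h ((bddSet_iff_subset_gball hc x).mpr ⟨r, hr⟩)

lemma reachableOutside_gball_of_dist_le (hc : G.Connected) {s ℓ : ℕ} (huv : G.dist u v ≤ ℓ)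
    (hu : s + ℓ < G.dist x u) : ReachableOutside G (gball G x s) u v := by
  refine .of_dist_le hc huv fun z hz hzx => ?_
  have : G.dist x u ≤ G.dist x z + G.dist z u := hc.dist_triangle
  have hzx' : G.dist x z ≤ s := hzx
  rw [SimpleGraph.dist_comm (u := z)] at this
  omega

/-- Walk towards `x`: until the first vertex of `S` the walk stays outside the component of `y`,
hence outside `Q`; from that vertex continue by `hS`. -/
lemma reachableOutside_of_notMem_compOutside (hc : G.Connected) (hQ : Q ⊆ compOutside G S y)
    (hS : ∀ u ∈ S, ReachableOutside G Q u x) (hu : u ∉ compOutside G S y) :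
    ReachableOutside G Q u x := by
  obtain ⟨p⟩ := hc.preconnected u x
  induction p with
  | nil => exact .refl fun h => hu (hQ h)
  | @cons u b _ hub p ih =>
    by_cases huS : u ∈ S
    · exact hS u huS
    have hb : b ∉ compOutside G S y := fun hb =>
      hu ((ReachableOutside.of_adj hub huS hb.left_notMem).trans hb)
    exact (ReachableOutside.of_adj hub (fun h => hu (hQ h)) (fun h => hb (hQ h))).trans (ih hS hb)

lemma gball_subset_compOutside (hc : G.Connected) {σ ρ : ℕ} (hS : S ⊆ gball G x σ)
    (hxy : ρ + σ < G.dist x y) : gball G y ρ ⊆ compOutside G S y := by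
  refine fun z hz => (ReachableOutside.of_dist_le hc hz fun q hq hqS => ?_).symm
  have : G.dist x y ≤ G.dist x q + G.dist q y := hc.dist_triangle
  have hqS' : G.dist x q ≤ σ := hS hqS
  rw [SimpleGraph.dist_comm (u := q)] at this
  omega

lemma reachableOutside_of_far (hc : G.Connected) {σ ρ : ℕ} (hS : S ⊆ gball G x σ)
    (hQ : Q ⊆ gball G y ρ) (hxy : ρ + 2 * σ < G.dist x y) (hu : u ∉ compOutside G S y) :
    ReachableOutside G Q u x := by
  refine reachableOutside_of_notMem_compOutside hc
    (hQ.trans (gball_subset_compOutside hc hS (by omega))) (fun v hv => ?_) hu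
  have hv' : G.dist x v ≤ σ := hS hv
  refine .of_dist_le hc (ℓ := σ) (by rwa [SimpleGraph.dist_comm]) fun q hq hqQ => ?_
  have h₁ : G.dist x y ≤ G.dist x v + G.dist v y := hc.dist_triangle
  have h₂ : G.dist v y ≤ G.dist v q + G.dist q y := hc.dist_triangle
  have hqQ' : G.dist y q ≤ ρ := hQ hqQ
  rw [SimpleGraph.dist_comm (u := q)] at h₂
  omega

lemma gball_mono {x : V} {r r' : ℕ} (h : r ≤ r') : gball G x r ⊆ gball G x r' :=
  fun _ hv => le_trans hv h

lemma bddSet_gball (hc : G.Connected) (x : V) (r : ℕ) : BddSet G (gball G x r) :=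
  (bddSet_iff_subset_gball hc x).mpr ⟨r, subset_rfl⟩

lemma BddSet.union (hc : G.Connected) (hS : BddSet G S) (hT : BddSet G T) :
    BddSet G (S ∪ T) := by
  obtain ⟨x⟩ := hc.nonempty
  obtain ⟨r, hr⟩ := (bddSet_iff_subset_gball hc x).mp hS
  obtain ⟨r', hr'⟩ := (bddSet_iff_subset_gball hc x).mp hT
  exact (bddSet_iff_subset_gball hc x).mpr ⟨max r r', Set.union_subset
    (hr.trans (gball_mono (le_max_left _ _))) (hr'.trans (gball_mono (le_max_right _ _)))⟩

end Metric

lemma ReachableOutside.map (hc : G.Connected) {Q S : Set V} {u v : V} (f : V → V) {γ : ℕ}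
    (hf : ∀ a b, G.Adj a b → G.dist (f a) (f b) ≤ γ)
    (hQS : ∀ a ∉ Q, ∀ x, G.dist (f a) x ≤ γ → x ∉ S)
    (h : ReachableOutside G Q u v) : ReachableOutside G S (f u) (f v) := by
  obtain ⟨p, hp⟩ := h
  induction p with
  | nil => exact .refl (hQS _ (hp _ (Walk.start_mem_support _)) _ (by simp))
  | @cons a b _ hab p ih =>
    exact (ReachableOutside.of_dist_le hc (hf a b hab) (hQS a (hp a (by simp)))).trans
      (ih fun x hx => hp x (by simp [hx]))

lemma ReachableOutside.map_preimage_gball (hc : G.Connected) {u v x : V} {s γ : ℕ}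
    (f : V → V) (hf : ∀ a b, G.Adj a b → G.dist (f a) (f b) ≤ γ)
    (h : ReachableOutside G (f ⁻¹' gball G x (s + γ)) u v) :
    ReachableOutside G (gball G x s) (f u) (f v) := by
  refine h.map hc f hf fun a ha z hz hzx => ha ?_
  have : G.dist x (f a) ≤ G.dist x z + G.dist z (f a) := hc.dist_triangle
  have hzx' : G.dist x z ≤ s := hzx
  rw [SimpleGraph.dist_comm (u := z)] at this
  show G.dist x (f a) ≤ s + γ
  omega

/-- `IsQI` with both constants equal to `κ` and natural-number data, so that graph distances
can be handled by `omega`. -/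
structure IsNatQI (G : SimpleGraph V) (κ c : ℕ) (f : V → V) : Prop where
  dist_le : ∀ a b, G.dist (f a) (f b) ≤ κ * G.dist a b + κ
  le_dist : ∀ a b, G.dist a b ≤ κ * G.dist (f a) (f b) + κ * κ
  exists_dist_le : ∀ v, ∃ w, G.dist v (f w) ≤ c

lemma CoarselyTransitive.exists_isNatQI (hct : CoarselyTransitive G) :
    ∃ κ : ℕ, ∀ x y : V, ∃ (f : V → V) (c : ℕ), f x = y ∧ IsNatQI G κ c f := by
  obtain ⟨K, hK1, hK⟩ := hct
  have hK0 : 0 < K := one_pos.trans_le hK1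
  have hKκ : K ≤ ⌈K⌉₊ := Nat.le_ceil K
  refine ⟨⌈K⌉₊, fun x y => ?_⟩
  obtain ⟨f, ⟨hqie, C, -, hC⟩, hfx⟩ := hK x y
  refine ⟨f, ⌈C⌉₊, hfx, ⟨fun a b => ?_, fun a b => ?_, fun v => ?_⟩⟩
  · have h : (G.dist (f a) (f b) : ℝ) ≤ K * G.dist a b + K := (hqie a b).2
    have : (0 : ℝ) ≤ G.dist a b := Nat.cast_nonneg _
    have : (G.dist (f a) (f b) : ℝ) ≤ ⌈K⌉₊ * G.dist a b + ⌈K⌉₊ := by nlinarith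
    exact_mod_cast this
  · have h : 1 / K * G.dist a b - K ≤ (G.dist (f a) (f b) : ℝ) := (hqie a b).1
    have hd : (G.dist a b : ℝ) ≤ K * G.dist (f a) (f b) + K * K := by
      have := mul_le_mul_of_nonneg_left h hK0.le
      rwa [mul_sub, ← mul_assoc, mul_one_div_cancel hK0.ne', one_mul, sub_le_iff_le_add] at this
    have : (0 : ℝ) ≤ G.dist (f a) (f b) := Nat.cast_nonneg _
    have : (G.dist a b : ℝ) ≤ ⌈K⌉₊ * G.dist (f a) (f b) + ⌈K⌉₊ * ⌈K⌉₊ := by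
      nlinarith
    exact_mod_cast this
  · obtain ⟨w, hw⟩ := hC v
    have : (G.dist v (f w) : ℝ) ≤ ⌈C⌉₊ := hw.trans (Nat.le_ceil C)
    exact ⟨w, by exact_mod_cast this⟩

namespace IsNatQI

variable {κ c : ℕ} {f : V → V}

lemma dist_le_of_adj (hf : IsNatQI G κ c f) {a b : V} (hab : G.Adj a b) :
    G.dist (f a) (f b) ≤ 2 * κ := by
  have h := hf.dist_le a b
  rw [dist_eq_one_iff_adj.mpr hab] at h
  omega

lemma preimage_gball_subset (hf : IsNatQI G κ c f) {a x : V} (hax : f a = x) (m : ℕ) :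
    f ⁻¹' gball G x m ⊆ gball G a (κ * m + κ * κ) := fun b hb =>
  calc G.dist a b ≤ κ * G.dist (f a) (f b) + κ * κ := hf.le_dist a b
    _ ≤ κ * m + κ * κ := by rw [hax]; gcongr; exact hb

lemma dist_le_of_adj_of_rightInverse (hf : IsNatQI G κ c f) (hc : G.Connected) {g : V → V}
    (hg : ∀ v, G.dist v (f (g v)) ≤ c) {a b : V} (hab : G.Adj a b) :
    G.dist (g a) (g b) ≤ κ * (2 * c + 1) + κ * κ := by
  have hab' : G.dist a b = 1 := dist_eq_one_iff_adj.mpr hab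
  have h₁ : G.dist (f (g a)) (f (g b)) ≤ G.dist (f (g a)) a + G.dist a (f (g b)) :=
    hc.dist_triangle
  have h₂ : G.dist a (f (g b)) ≤ G.dist a b + G.dist b (f (g b)) := hc.dist_triangle
  have h₃ := hg a
  have h₄ := hg b
  rw [SimpleGraph.dist_comm] at h₃
  calc G.dist (g a) (g b) ≤ κ * G.dist (f (g a)) (f (g b)) + κ * κ := hf.le_dist _ _
    _ ≤ κ * (2 * c + 1) + κ * κ := by gcongr; omega

lemma reachableOutside_rightInverse (hf : IsNatQI G κ c f) (hc : G.Connected) {g : V → V}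
    (hg : ∀ v, G.dist v (f (g v)) ≤ c) {x u v : V} {m : ℕ}
    (h : ReachableOutside G (gball G x (m + c + (κ * (κ * (2 * c + 1) + κ * κ) + κ))) u v) :
    ReachableOutside G (f ⁻¹' gball G x m) (g u) (g v) := by
  refine h.map hc g (fun a a' haa' => hf.dist_le_of_adj_of_rightInverse hc hg haa')
    fun a ha z hz hzQ => ha ?_
  have h₁ : G.dist (f (g a)) (f z) ≤ κ * (κ * (2 * c + 1) + κ * κ) + κ :=
    (hf.dist_le _ _).trans (by gcongr)
  have h₂ : G.dist x a ≤ G.dist x (f z) + G.dist (f z) (f (g a)) + G.dist (f (g a)) a :=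
    hc.dist_triangle.trans (Nat.add_le_add_right hc.dist_triangle _)
  have h₃ := hg a
  have hzQ' : G.dist x (f z) ≤ m := hzQ
  rw [SimpleGraph.dist_comm (u := f z), SimpleGraph.dist_comm (u := f (g a)) (v := a)] at h₂
  show G.dist x a ≤ _
  omega

end IsNatQI

/-- An injection `ι → U(X, B)`, encoded by representatives: `w i` lies in the `i`-th
component. -/
structure IsUnbddSeparated (G : SimpleGraph V) (B : Set V) {ι : Type*} (w : ι → V) : Prop where
  not_bddSet : ∀ i, ¬ BddSet G (compOutside G B (w i))
  pairwise : Pairwise fun i j => ¬ ReachableOutside G B (w i) (w j)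

namespace IsUnbddSeparated

variable {B Q : Set V} {ι : Type*} {w : ι → V}

lemma notMem (hw : IsUnbddSeparated G B w) (i : ι) : w i ∉ B :=
  notMem_of_not_bddSet_compOutside (hw.not_bddSet i)

lemma comp (hw : IsUnbddSeparated G B w) {κ : Type*} {e : κ → ι} (he : e.Injective) :
    IsUnbddSeparated G B (w ∘ e) :=
  ⟨fun k => hw.not_bddSet (e k), fun _ _ hkl => hw.pairwise (he.ne hkl)⟩

lemma mk_le {ι : Type u} {w : ι → V} (hw : IsUnbddSeparated G B w) :
    #ι ≤ #(unbddComps G B) := by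
  let F : ι → unbddComps G B := fun i =>
    ⟨(G.induce Bᶜ).connectedComponentMk ⟨w i, hw.notMem i⟩, by
      simpa [unbddComps, compVerts_connectedComponentMk] using hw.not_bddSet i⟩
  refine Cardinal.mk_le_of_injective (f := F) fun i j hij => ?_
  by_contra hne
  have := ConnectedComponent.eq.mp (congrArg Subtype.val hij)
  exact hw.pairwise hne (ReachableOutside.iff_reachable_induce.mpr ⟨_, _, this⟩)

lemma sumElim (hw : IsUnbddSeparated G B w) {κ : Type*} {t : κ → V}
    (ht : IsUnbddSeparated G Q t) (a : ι) (hQ : Q ⊆ compOutside G B (w a))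
    (htQ : ∀ k, compOutside G Q (t k) ⊆ compOutside G B (w a)) :
    IsUnbddSeparated G (B ∪ Q) (Sum.elim t fun i : {i // i ≠ a} => w i) := by
  have hdisj : ∀ i : {i // i ≠ a}, Disjoint (compOutside G B (w i)) Q := fun i =>
    (disjoint_compOutside (hw.pairwise i.2)).mono_right hQ
  have hsep : ∀ (k : κ) (i : {i // i ≠ a}), ¬ ReachableOutside G (B ∪ Q) (t k) (w i) :=
    fun k i h => hw.pairwise i.2.symm
      ((htQ k (.refl (ht.notMem k))).symm.trans (h.mono Set.subset_union_left))
  refine ⟨?_, ?_⟩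
  · rintro (k | i)
    · rw [Sum.elim_inl, Set.union_comm, compOutside_union_of_disjoint
        ((disjoint_compOutside_self (v := w a)).mono_left (htQ k))]
      exact ht.not_bddSet k
    · rw [Sum.elim_inr, compOutside_union_of_disjoint (hdisj i)]
      exact hw.not_bddSet i
  · rintro (k | i) (l | j) hne h
    · exact ht.pairwise (fun hkl => hne (congrArg _ hkl)) (h.mono Set.subset_union_right)
    · exact hsep k j h
    · exact hsep l i h.symm
    · exact hw.pairwise (fun hij => hne (congrArg _ (Subtype.ext hij)))
        (h.mono Set.subset_union_left)

/-- Since the three components are pairwise separated, at most one of them reaches `x`. -/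
lemma exists_fin_two (ht : IsUnbddSeparated G Q (t : Fin 3 → V)) (x : V) :
    ∃ s : Fin 2 → V, IsUnbddSeparated G Q s ∧ ∀ k, ¬ ReachableOutside G Q (s k) x := by
  have hle : ∀ i j, i ≠ j →
      ReachableOutside G Q (t i) x → ¬ ReachableOutside G Q (t j) x :=
    fun i j hij hi hj => ht.pairwise hij (hi.trans hj.symm)
  by_cases h0 : ReachableOutside G Q (t 0) x
  · exact ⟨t ∘ ![1, 2], ht.comp (by decide), Fin.forall_fin_two.mpr
      ⟨hle 0 1 (by decide) h0, hle 0 2 (by decide) h0⟩⟩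
  by_cases h1 : ReachableOutside G Q (t 1) x
  · exact ⟨t ∘ ![0, 2], ht.comp (by decide),
      Fin.forall_fin_two.mpr ⟨h0, hle 1 2 (by decide) h1⟩⟩
  · exact ⟨t ∘ ![0, 1], ht.comp (by decide), Fin.forall_fin_two.mpr ⟨h0, h1⟩⟩

end IsUnbddSeparated

lemma exists_isUnbddSeparated_unbddComps (B : Set V) :
    ∃ w : unbddComps G B → V, IsUnbddSeparated G B w := by
  choose r hr using fun C : unbddComps G B => C.1.nonempty_supp
  simp only [ConnectedComponent.mem_supp_iff] at hr
  refine ⟨fun C => (r C).1, fun C => ?_, fun C D hCD h => hCD ?_⟩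
  · rw [← compVerts_connectedComponentMk (r C).2, hr]
    exact C.2
  · obtain ⟨_, _, h⟩ := ReachableOutside.iff_reachable_induce.mp h
    exact Subtype.ext ((hr C).symm.trans ((ConnectedComponent.eq.mpr h).trans (hr D)))

section QuasiIsometry

variable {κ : ℕ} {B₀ : Set V} {x₀ : V} {s : ℕ} {ι : Type*} [Nontrivial ι] {v : ι → V}

lemma IsUnbddSeparated.exists_not_bddSet_compOutside_gball (hc : G.Connected)
    (hG : ∀ x y : V, ∃ (f : V → V) (c : ℕ), f x = y ∧ IsNatQI G κ c f)
    (hB₀ : B₀ ⊆ gball G x₀ s) (hv : IsUnbddSeparated G B₀ v) (i : ι) (b : ℕ) :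
    ∃ u ∈ compOutside G B₀ (v i), ¬ BddSet G (compOutside G (gball G x₀ b) u) := by
  by_contra! hbdd
  obtain ⟨i₀, i₁, hi⟩ := exists_pair_ne ι
  set ρ := κ * (s + 2 * κ) + κ * κ
  obtain ⟨z, hzC, hz⟩ := exists_lt_dist_of_not_bddSet hc x₀ (hv.not_bddSet i) (ρ + 2 * b)
  obtain ⟨Λ, hΛ⟩ := (bddSet_iff_subset_gball hc z).mp (hbdd z hzC)
  obtain ⟨f, c, hfz, hf⟩ := hG z x₀
  have hQ : f ⁻¹' gball G x₀ (s + 2 * κ) ⊆ gball G z ρ := hf.preimage_gball_subset hfz _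
  suffices h : ∀ j, ReachableOutside G B₀ (v j) (f x₀) from
    hv.pairwise hi ((h i₀).trans (h i₁).symm)
  intro j
  obtain ⟨a, haC, ha⟩ :=
    exists_lt_dist_of_not_bddSet hc x₀ (hv.not_bddSet j) (s + c + (κ * Λ + κ))
  obtain ⟨w, hw⟩ := hf.exists_dist_le a
  have hwz : w ∉ compOutside G (gball G x₀ b) z := fun hwz => by
    have h₁ : G.dist x₀ (f w) ≤ κ * Λ + κ :=
      calc G.dist x₀ (f w) ≤ κ * G.dist z w + κ := hfz ▸ hf.dist_le z w
        _ ≤ κ * Λ + κ := by gcongr; exact hΛ hwz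
    have h₂ : G.dist x₀ a ≤ G.dist x₀ (f w) + G.dist (f w) a := hc.dist_triangle
    rw [SimpleGraph.dist_comm] at hw
    omega
  have hwx₀ := reachableOutside_of_far hc subset_rfl hQ hz hwz
  exact haC.symm.trans (((reachableOutside_gball_of_dist_le hc hw (by omega)).trans
    (hwx₀.map_preimage_gball hc f fun _ _ => hf.dist_le_of_adj)).mono hB₀)

lemma IsUnbddSeparated.exists_forall_subset_gball (hc : G.Connected)
    (hG : ∀ x y : V, ∃ (f : V → V) (c : ℕ), f x = y ∧ IsNatQI G κ c f)
    (hB₀ : B₀ ⊆ gball G x₀ s) (hv : IsUnbddSeparated G B₀ v) :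
    ∃ R, ∀ y, ∃ Q ⊆ gball G y R, ∃ t : ι → V, IsUnbddSeparated G Q t := by
  refine ⟨κ * (s + 2 * κ) + κ * κ, fun y => ?_⟩
  obtain ⟨f, c, hfy, hf⟩ := hG y x₀
  choose g hg using hf.exists_dist_le
  set b := s + 2 * κ + c + (κ * (κ * (2 * c + 1) + κ * κ) + κ)
  choose u hu hub using fun i => hv.exists_not_bddSet_compOutside_gball hc hG hB₀ i b
  have hfar : ∀ i, b < G.dist x₀ (u i) := fun i => by
    simpa [gball] using notMem_of_not_bddSet_compOutside (hub i)
  refine ⟨f ⁻¹' gball G x₀ (s + 2 * κ), hf.preimage_gball_subset hfy _, g ∘ u,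
    ⟨fun i hbdd => ?_, fun i j hij h => ?_⟩⟩
  · obtain ⟨r, hr⟩ := (bddSet_iff_subset_gball hc y).mp hbdd
    obtain ⟨w, hw, hwd⟩ := exists_lt_dist_of_not_bddSet hc x₀ (hub i) (κ * r + κ + c)
    have hgw := hf.reachableOutside_rightInverse hc hg (m := s + 2 * κ) hw
    have h₁ : G.dist x₀ (f (g w)) ≤ κ * r + κ :=
      calc G.dist x₀ (f (g w)) ≤ κ * G.dist y (g w) + κ := hfy ▸ hf.dist_le y (g w)
        _ ≤ κ * r + κ := by gcongr; exact hr hgw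
    have h₂ : G.dist x₀ w ≤ G.dist x₀ (f (g w)) + G.dist (f (g w)) w := hc.dist_triangle
    have h₃ := hg w
    rw [SimpleGraph.dist_comm] at h₃
    omega
  · have hleg : ∀ k, ReachableOutside G (gball G x₀ s) (u k) (f (g (u k))) := fun k =>
      reachableOutside_gball_of_dist_le hc (hg (u k)) (by have := hfar k; omega)
    have hfg := h.map_preimage_gball hc f fun _ _ => hf.dist_le_of_adj
    exact hv.pairwise hij ((hu i).symm.trans
      ((((hleg i).trans (hfg.trans (hleg j).symm))).mono hB₀ |>.trans (hu j)))

end QuasiIsometry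

lemma exists_bddSet_mk_unbddComps_add_one_le (hc : G.Connected) {R : ℕ}
    (hR : ∀ y, ∃ Q ⊆ gball G y R, ∃ t : Fin 3 → V, IsUnbddSeparated G Q t)
    {B : Set V} (hB : BddSet G B) (a : unbddComps G B) :
    ∃ B', BddSet G B' ∧ #(unbddComps G B) + 1 ≤ #(unbddComps G B') := by
  classical
  obtain ⟨w, hw⟩ := exists_isUnbddSeparated_unbddComps (G := G) B
  set x := w a
  obtain ⟨σ, hσ⟩ := (bddSet_iff_subset_gball hc x).mp hB
  obtain ⟨y, hy, hyx⟩ := exists_lt_dist_of_not_bddSet hc x (hw.not_bddSet a) (R + 2 * σ)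
  obtain ⟨Q, hQ, t, ht⟩ := hR y
  obtain ⟨t', ht', ht'x⟩ := ht.exists_fin_two x
  have hD := compOutside_eq_of_mem hy
  have hQD : Q ⊆ compOutside G B y := hQ.trans (gball_subset_compOutside hc hσ (by omega))
  have ht'D : ∀ k, compOutside G Q (t' k) ⊆ compOutside G B y := fun k p hp => by
    by_contra hpD
    exact ht'x k (hp.symm.trans (reachableOutside_of_far hc hσ hQ hyx hpD))
  have hsep := hw.sumElim ht' a (hD ▸ hQD) (hD ▸ ht'D)
  refine ⟨B ∪ Q, hB.union hc ((bddSet_gball hc y R).subset hQ), le_trans ?_ hsep.mk_le⟩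
  rw [← Cardinal.mk_congr (Equiv.optionSubtypeNe a), Cardinal.mk_option, Cardinal.mk_sum,
    Cardinal.mk_fin, Cardinal.lift_natCast, Cardinal.lift_uzero, Nat.cast_ofNat, add_assoc,
    one_add_one_eq_two, add_comm]

lemma exists_bddSet_natCast_lt_mk_unbddComps (hc : G.Connected) (hct : CoarselyTransitive G)
    {B₀ : Set V} (hB₀ : BddSet G B₀) (h3 : 3 ≤ #(unbddComps G B₀)) (M : ℕ) :
    ∃ B, BddSet G B ∧ (M : Cardinal) < #(unbddComps G B) := by
  obtain ⟨κ, hG⟩ := hct.exists_isNatQI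
  obtain ⟨e⟩ : Nonempty (Fin 3 ↪ unbddComps G B₀) := lift_mk_le'.mp (by simpa using h3)
  obtain ⟨x₀⟩ := hc.nonempty
  obtain ⟨s, hs⟩ := (bddSet_iff_subset_gball hc x₀).mp hB₀
  obtain ⟨w, hw⟩ := exists_isUnbddSeparated_unbddComps (G := G) B₀
  obtain ⟨R, hR⟩ := (hw.comp e.injective).exists_forall_subset_gball hc hG hs
  induction M with
  | zero => exact ⟨B₀, hB₀, (by norm_num : (0 : Cardinal) < 3).trans_le h3⟩
  | succ M ih =>
    obtain ⟨B, hB, hM⟩ := ih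
    obtain ⟨a⟩ := Cardinal.mk_ne_zero_iff.mp (zero_le.trans_lt hM).ne'
    obtain ⟨B', hB', hBB'⟩ := exists_bddSet_mk_unbddComps_add_one_le hc hR hB a
    refine ⟨B', hB', lt_of_lt_of_le ?_ hBB'⟩
    exact_mod_cast (Cardinal.add_lt_add_iff_of_right_lt_aleph0 Cardinal.one_lt_aleph0).mpr hM

/-- in a connected coarsely transitive graph, if some bounded vertex set has
at least three unbounded complementary components, then for each `M` there is a bounded
vertex set with more than `M` unbounded complementary components. Consequently, a
coarsely transitive graph has either zero, one, two, or infinitely many ends: either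
every bounded set has at most two unbounded complementary components, or the number of
unbounded complementary components of bounded sets is unbounded. -/
theorem stmt7 {V : Type*} (G : SimpleGraph V) (hconn : G.Connected)
    (hct : CoarselyTransitive G) :
    ((∃ B₀ : Set V, BddSet G B₀ ∧ 3 ≤ Cardinal.mk ↥(unbddComps G B₀)) →
      ∀ M : ℕ, ∃ B : Set V, BddSet G B ∧ (M : Cardinal) < Cardinal.mk ↥(unbddComps G B)) ∧
    ((∀ B : Set V, BddSet G B → Cardinal.mk ↥(unbddComps G B) ≤ 2) ∨
      (∀ M : ℕ, ∃ B : Set V, BddSet G B ∧ (M : Cardinal) < Cardinal.mk ↥(unbddComps G B))) := by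
  refine ⟨fun ⟨B₀, hB₀, h3⟩ => exists_bddSet_natCast_lt_mk_unbddComps hconn hct hB₀ h3,
    or_iff_not_imp_left.mpr fun h => ?_⟩
  simp only [not_forall, not_le, exists_prop] at h
  obtain ⟨B, hB, h2⟩ := h
  exact exists_bddSet_natCast_lt_mk_unbddComps hconn hct hB
    (by exact_mod_cast (Cardinal.natCast_add_one_le_iff (n := 2)).mpr h2)
end
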